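/- arXiv:1506.02470 — 8 statements merged into one kernel-verified Lean document; each statement's English description precedes it below -/
import Mathlib

section
/- Let Q be a real d×d matrix with μ := min{Re(λ) : λ eigenvalue of Q}, and suppose some eigenvalue λ with Re(λ) = μ is defective. Then for every ε > 0 there exists a symmetric positive definite matrix P ∈ ℝ^{d×d} with P·Q + Qᵀ·P ≥ 2(μ − ε)·P. -/
open Matrix
open scoped ComplexOrder

namespace Stmt1Aux

noncomputable section

/-- A 1×1 complex matrix with nonnegative entry is PSD. -/
lemma one_dim_posSemidef {M : Matrix (Fin 1) (Fin 1) ℂ} (h : 0 ≤ M 0 0) :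
    M.PosSemidef := by
  have hsa : star (M 0 0) = M 0 0 := IsSelfAdjoint.of_nonneg h
  rw [Matrix.posSemidef_iff_dotProduct_mulVec]
  constructor
  · ext i j
    fin_cases i <;> fin_cases j
    simpa [Matrix.conjTranspose_apply] using hsa
  · intro x
    have hx : star x ⬝ᵥ M *ᵥ x = M 0 0 * (star (x 0) * x 0) := by
      simp [dotProduct, Matrix.mulVec, Fin.sum_univ_one]
      ring
    rw [hx]
    exact mul_nonneg h (star_mul_self_nonneg _)

lemma diag_nonneg {ι : Type*} [Fintype ι] [DecidableEq ι]
    {M : Matrix ι ι ℂ} (h : M.PosSemidef) (i : ι) : 0 ≤ M i i := by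
  have := h.dotProduct_mulVec_nonneg (Pi.single i 1)
  simpa [dotProduct, Matrix.mulVec, Pi.single_apply, Finset.mul_sum] using this

lemma posDef_smul {ι : Type*} [Fintype ι] {P : Matrix ι ι ℂ} (hP : P.PosDef)
    {t : ℝ} (ht : 0 < t) : ((t : ℂ) • P).PosDef := by
  rw [Matrix.posDef_iff_dotProduct_mulVec]
  constructor
  · have h1 := hP.1
    unfold Matrix.IsHermitian at h1 ⊢
    rw [Matrix.conjTranspose_smul, h1]
    congr 1
    simp [Complex.star_def, Complex.conj_ofReal]
  · intro x hx
    have : star x ⬝ᵥ ((t : ℂ) • P) *ᵥ x = (t : ℂ) * (star x ⬝ᵥ P *ᵥ x) := by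
      rw [Matrix.smul_mulVec]
      simp only [dotProduct, Finset.mul_sum, Pi.smul_apply, smul_eq_mul]
      exact Finset.sum_congr rfl fun i _ => by ring
    rw [this]
    exact mul_pos (Complex.zero_lt_real.2 ht) (hP.dotProduct_mulVec_pos hx)

lemma posDef_fromBlocks {ι κ : Type*} [Fintype ι] [Fintype κ]
    {A : Matrix ι ι ℂ} {D : Matrix κ κ ℂ} (hA : A.PosDef) (hD : D.PosDef) :
    (Matrix.fromBlocks A 0 0 D).PosDef := by
  rw [Matrix.posDef_iff_dotProduct_mulVec]
  constructor
  · unfold Matrix.IsHermitian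
    rw [Matrix.fromBlocks_conjTranspose, hA.1, hD.1]
    simp
  · intro x hx
    have hxe : x = Sum.elim (x ∘ Sum.inl) (x ∘ Sum.inr) := (Sum.elim_comp_inl_inr x).symm
    have hq : ∀ (u : ι → ℂ) (w : κ → ℂ),
        star (Sum.elim u w) ⬝ᵥ (Matrix.fromBlocks A 0 0 D) *ᵥ (Sum.elim u w)
        = star u ⬝ᵥ A *ᵥ u + star w ⬝ᵥ D *ᵥ w := by
      intro u w
      rw [Matrix.fromBlocks_mulVec]
      simp [Function.star_sumElim, sumElim_dotProduct_sumElim]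
    rw [hxe, hq]
    by_cases h1 : x ∘ Sum.inl = 0
    · have h2 : x ∘ Sum.inr ≠ 0 := by
        intro h2
        apply hx
        rw [hxe, h1, h2]
        simp
      exact add_pos_of_nonneg_of_pos (hA.posSemidef.dotProduct_mulVec_nonneg _) (hD.dotProduct_mulVec_pos h2)
    · exact add_pos_of_pos_of_nonneg (hA.dotProduct_mulVec_pos h1) (hD.posSemidef.dotProduct_mulVec_nonneg _)

/-- transfer of the Lyapunov condition across similarity -/
lemma transfer {ι ι' : Type*} [Fintype ι] [Fintype ι'] [DecidableEq ι] [DecidableEq ι']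
    (A : Matrix ι ι ℂ) (B : Matrix ι' ι' ℂ) (M : Matrix ι' ι ℂ) (N : Matrix ι ι' ℂ)
    (hNM : N * M = 1) (hcomm : B * M = M * A) (b : ℂ)
    (h : ∃ P : Matrix ι' ι' ℂ, P.PosDef ∧ (P * B + Bᴴ * P - b • P).PosSemidef) :
    ∃ P : Matrix ι ι ℂ, P.PosDef ∧ (P * A + Aᴴ * P - b • P).PosSemidef := by
  obtain ⟨P, hP, hS⟩ := h
  refine ⟨Mᴴ * P * M, Matrix.PosDef.of_dotProduct_mulVec_pos ?_ ?_, ?_⟩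
  · unfold Matrix.IsHermitian
    rw [Matrix.conjTranspose_mul, Matrix.conjTranspose_mul,
      Matrix.conjTranspose_conjTranspose, hP.1.eq, Matrix.mul_assoc]
  · intro x hx
    have hMx : M *ᵥ x ≠ 0 := by
      intro hz
      apply hx
      have : (N * M) *ᵥ x = N *ᵥ (M *ᵥ x) := by rw [Matrix.mulVec_mulVec]
      rw [hNM, hz] at this
      simpa using this
    have key : star x ⬝ᵥ (Mᴴ * P * M) *ᵥ x = star (M *ᵥ x) ⬝ᵥ P *ᵥ (M *ᵥ x) := by
      simp only [star_mulVec, dotProduct_mulVec, vecMul_vecMul, Matrix.mul_assoc]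
    rw [key]
    exact hP.dotProduct_mulVec_pos hMx
  · have hMB : Mᴴ * Bᴴ = Aᴴ * Mᴴ := by
      rw [← Matrix.conjTranspose_mul, hcomm, Matrix.conjTranspose_mul]
    have h1 : Mᴴ * (P * B) * M = Mᴴ * P * M * A := by
      simp only [Matrix.mul_assoc, hcomm]
    have h2 : Mᴴ * (Bᴴ * P) * M = Aᴴ * (Mᴴ * P * M) := by
      calc Mᴴ * (Bᴴ * P) * M = Mᴴ * Bᴴ * (P * M) := by simp only [Matrix.mul_assoc]
        _ = Aᴴ * Mᴴ * (P * M) := by rw [hMB]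
        _ = Aᴴ * (Mᴴ * P * M) := by simp only [Matrix.mul_assoc]
    have key : Mᴴ * (P * B + Bᴴ * P - b • P) * M
        = (Mᴴ * P * M) * A + Aᴴ * (Mᴴ * P * M) - b • (Mᴴ * P * M) := by
      rw [Matrix.mul_sub, Matrix.sub_mul, Matrix.mul_add, Matrix.add_mul, h1, h2]
      congr 1
      rw [Matrix.mul_smul, Matrix.smul_mul]
    have := hS.conjTranspose_mul_mul_same M
    rwa [key] at this

/-- The key complex Lyapunov lemma, proved by induction on the dimension. -/
lemma key (n : ℕ) : ∀ (A : Matrix (Fin n) (Fin n) ℂ) (μ : ℝ),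
    (∀ z ∈ spectrum ℂ A, μ ≤ z.re) → ∀ b : ℝ, b < 2 * μ →
    ∃ P : Matrix (Fin n) (Fin n) ℂ, P.PosDef ∧
      (P * A + Aᴴ * P - (b : ℂ) • P).PosSemidef := by
  induction n with
  | zero =>
    intro A μ _ b _
    refine ⟨1, Matrix.PosDef.one, Matrix.PosSemidef.of_dotProduct_mulVec_nonneg ?_ fun x => ?_⟩
    · ext i j
      exact i.elim0
    · simp [dotProduct]
  | succ n ih =>
    intro A μ hspec b hb
    -- find an eigenvalue and eigenvector
    set V := Fin (n + 1) → ℂ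
    set f : Module.End ℂ V := Matrix.toLin' A with hf
    obtain ⟨lam, hlam⟩ := Module.End.exists_eigenvalue f
    obtain ⟨v, hv⟩ := hlam.exists_hasEigenvector
    -- spectrum of f equals spectrum of A
    have htmA : LinearMap.toMatrixAlgEquiv (Pi.basisFun ℂ (Fin (n + 1))) f = A := by
      ext i j
      rw [LinearMap.toMatrixAlgEquiv_apply]
      simp [hf, Matrix.toLin'_apply, Pi.basisFun_apply, Pi.basisFun_repr]
    have hspecf : spectrum ℂ f = spectrum ℂ A := by
      conv_rhs => rw [← htmA]
      exact (AlgEquiv.spectrum_eq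
        (LinearMap.toMatrixAlgEquiv (Pi.basisFun ℂ (Fin (n + 1)))) f).symm
    have hlam_re : μ ≤ lam.re := by
      apply hspec
      rw [← hspecf]
      exact Module.End.hasEigenvalue_iff_mem_spectrum.mp hlam
    -- a basis adapted to the eigenvector
    set p : Submodule ℂ V := ℂ ∙ v with hp
    obtain ⟨q, hq⟩ := Submodule.exists_isCompl p
    have hp1 : Module.finrank ℂ p = 1 := finrank_span_singleton hv.2
    have hqn : Module.finrank ℂ q = n := by
      have h1 := Submodule.finrank_add_eq_of_isCompl hq
      have h2 : Module.finrank ℂ V = n + 1 := Module.finrank_fin_fun ℂ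
      omega
    let bp : Module.Basis (Fin 1) ℂ p := Module.finBasisOfFinrankEq ℂ p hp1
    let bq : Module.Basis (Fin n) ℂ q := Module.finBasisOfFinrankEq ℂ q hqn
    let e : Module.Basis (Fin 1 ⊕ Fin n) ℂ V :=
      (bp.prod bq).map (Submodule.prodEquivOfIsCompl p q hq)
    set B := LinearMap.toMatrix e e f with hB
    -- the first basis vector is an eigenvector
    have he0 : f (e (Sum.inl 0)) = lam • e (Sum.inl 0) := by
      have hmem : e (Sum.inl 0) ∈ p := by
        have heq : e (Sum.inl 0)
            = Submodule.prodEquivOfIsCompl p q hq ((bp.prod bq) (Sum.inl 0)) :=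
          Module.Basis.map_apply _ _ _
        have h1 : ((bp.prod bq) (Sum.inl 0)).1 = bp 0 := Module.Basis.prod_apply_inl_fst _ _ _
        have h2 : ((bp.prod bq) (Sum.inl 0)).2 = 0 := Module.Basis.prod_apply_inl_snd _ _ _
        rw [heq, Submodule.coe_prodEquivOfIsCompl', h1, h2,
          ZeroMemClass.coe_zero, add_zero]
        exact Submodule.coe_mem _
      have hple : p ≤ Module.End.eigenspace f lam := by
        rw [hp, Submodule.span_singleton_le_iff_mem]
        exact hv.1
      exact Module.End.mem_eigenspace_iff.mp (hple hmem)
    -- block structure of B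
    set r : Matrix (Fin 1) (Fin n) ℂ := B.toBlocks₁₂ with hr
    set A' : Matrix (Fin n) (Fin n) ℂ := B.toBlocks₂₂ with hA'
    have hcol : ∀ i, B i (Sum.inl 0) = if i = Sum.inl 0 then lam else 0 := by
      intro i
      rw [hB, LinearMap.toMatrix_apply, he0]
      simp [Finsupp.single_apply, eq_comm]
    have hB21 : B.toBlocks₂₁ = 0 := by
      ext i j
      have hj : j = 0 := Subsingleton.elim _ _
      subst hj
      simp [Matrix.toBlocks₂₁, hcol (Sum.inr i)]
    have hB11 : B.toBlocks₁₁ = lam • (1 : Matrix (Fin 1) (Fin 1) ℂ) := by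
      ext i j
      have hi : i = 0 := Subsingleton.elim _ _
      have hj : j = 0 := Subsingleton.elim _ _
      subst hi; subst hj
      simp [Matrix.toBlocks₁₁, hcol (Sum.inl 0)]
    have hBblocks : B = Matrix.fromBlocks (lam • 1) r 0 A' := by
      rw [← Matrix.fromBlocks_toBlocks B, hB21, hB11]
    -- spectrum of A' is contained in that of A
    have hA'spec : ∀ z ∈ spectrum ℂ A', μ ≤ z.re := by
      intro z hz
      apply hspec
      have hzB : z ∈ spectrum ℂ B := by
        rw [spectrum.mem_iff] at hz ⊢
        intro hu
        apply hz
        rw [Matrix.isUnit_iff_isUnit_det] at hu ⊢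
        have halg : ∀ (m : Type) [Fintype m] [DecidableEq m],
            algebraMap ℂ (Matrix m m ℂ) z = z • 1 := by
          intro m _ _
          rw [Algebra.algebraMap_eq_smul_one]
        rw [halg] at hu
        rw [halg]
        have hsplit : z • (1 : Matrix (Fin 1 ⊕ Fin n) (Fin 1 ⊕ Fin n) ℂ) - B
            = Matrix.fromBlocks (z • 1 - lam • 1) (-r) 0 (z • 1 - A') := by
          rw [hBblocks, ← Matrix.fromBlocks_one, Matrix.fromBlocks_smul]
          rw [sub_eq_add_neg, Matrix.fromBlocks_neg, Matrix.fromBlocks_add]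
          congr 1 <;> simp [sub_eq_add_neg]
        rw [hsplit, Matrix.det_fromBlocks_zero₂₁] at hu
        exact isUnit_of_mul_isUnit_right hu
      have hBf : spectrum ℂ B = spectrum ℂ f := by
        have hBm : LinearMap.toMatrixAlgEquiv e f = B := by
          ext i j
          rw [LinearMap.toMatrixAlgEquiv_apply, hB, LinearMap.toMatrix_apply]
        rw [← hBm]
        exact AlgEquiv.spectrum_eq _ f
      rw [← hspecf, ← hBf]
      exact hzB
    -- apply the induction hypothesis with margin
    obtain ⟨P', hP'pd, hS'⟩ := ih A' μ hA'spec (μ + b / 2) (by linarith)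
    set δ : ℝ := μ - b / 2 with hδ
    have hδpos : 0 < δ := by rw [hδ]; linarith
    set E₂₂ : Matrix (Fin n) (Fin n) ℂ := P' * A' + A'ᴴ * P' - (b : ℂ) • P' with hE22def
    have hE22 : E₂₂.PosDef := by
      have heq : E₂₂ = (δ : ℂ) • P' + (P' * A' + A'ᴴ * P' - ((μ + b / 2 : ℝ) : ℂ) • P') := by
        rw [hE22def, hδ]
        push_cast
        module
      rw [heq]
      exact (posDef_smul hP'pd hδpos).add_posSemidef hS'
    haveI : Invertible E₂₂ := hE22.isUnit.invertible
    -- the Schur complement bound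
    set X : Matrix (Fin 1) (Fin 1) ℂ := r * E₂₂⁻¹ * rᴴ with hX
    have hXpsd : X.PosSemidef := hE22.inv.posSemidef.mul_mul_conjTranspose_same r
    set C : ℝ := (X 0 0).re with hC
    have hC0 : 0 ≤ C := by
      have := diag_nonneg hXpsd 0
      rw [Complex.nonneg_iff] at this
      exact this.1
    have hX00 : X 0 0 = (C : ℂ) := by
      have := diag_nonneg hXpsd 0
      rw [Complex.nonneg_iff] at this
      rw [Complex.ext_iff]
      constructor
      · simp [hC]
      · simp [← this.2]
    set t : ℝ := (2 * lam.re - b) / (C + 1) with ht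
    have h2lb : 0 < 2 * lam.re - b := by linarith
    have htpos : 0 < t := div_pos h2lb (by linarith)
    have ht1 : t * (C + 1) = 2 * lam.re - b := div_mul_cancel₀ _ (by linarith)
    -- the candidate matrix for B
    set P : Matrix (Fin 1 ⊕ Fin n) (Fin 1 ⊕ Fin n) ℂ :=
      Matrix.fromBlocks ((t : ℂ) • 1) 0 0 P' with hPdef
    have hPpd : P.PosDef := posDef_fromBlocks (posDef_smul Matrix.PosDef.one htpos) hP'pd
    set s : ℝ := t * (2 * lam.re - b) with hs
    have hEblocks : P * B + Bᴴ * P - (b : ℂ) • P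
        = Matrix.fromBlocks ((s : ℂ) • 1) ((t : ℂ) • r) ((t : ℂ) • r)ᴴ E₂₂ := by
      rw [hBblocks, hPdef, Matrix.fromBlocks_conjTranspose, Matrix.fromBlocks_multiply,
        Matrix.fromBlocks_multiply, Matrix.fromBlocks_smul]
      rw [show ((t:ℂ) • r)ᴴ = (t : ℂ) • rᴴ by
        rw [Matrix.conjTranspose_smul]
        congr 1
        simp [Complex.star_def, Complex.conj_ofReal]]
      rw [sub_eq_add_neg, Matrix.fromBlocks_neg, Matrix.fromBlocks_add, Matrix.fromBlocks_add]
      rw [Matrix.fromBlocks_inj]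
      refine ⟨?_, ?_, ?_, ?_⟩
      · ext i j
        have hi : i = 0 := Subsingleton.elim _ _
        have hj : j = 0 := Subsingleton.elim _ _
        subst hi; subst hj
        simp only [Matrix.conjTranspose_smul, Matrix.conjTranspose_one, Matrix.smul_mul,
          Matrix.mul_smul, Matrix.one_mul, Matrix.mul_one, Matrix.zero_mul, Matrix.mul_zero,
          Matrix.conjTranspose_zero, add_zero, zero_add, smul_smul]
        simp only [Matrix.add_apply, Matrix.neg_apply, Matrix.smul_apply, Matrix.one_apply_eq,
          smul_eq_mul, mul_one, hs]
        rw [Complex.ext_iff]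
        constructor <;>
          simp [Complex.star_def, Complex.conj_ofReal, Complex.add_re, Complex.add_im,
            Complex.mul_re, Complex.mul_im] <;> ring
      · simp [Matrix.smul_mul]
      · simp [Matrix.mul_smul, mul_comm]
      · rw [hE22def, sub_eq_add_neg]
        simp
    refine transfer A B (e.toMatrix (Pi.basisFun ℂ (Fin (n + 1))))
      ((Pi.basisFun ℂ (Fin (n + 1))).toMatrix e) ?_ ?_ _ ⟨P, hPpd, ?_⟩
    · exact Module.Basis.toMatrix_mul_toMatrix_flip _ _
    · have hAf : LinearMap.toMatrix (Pi.basisFun ℂ (Fin (n + 1)))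
          (Pi.basisFun ℂ (Fin (n + 1))) f = A := by
        rw [hf, ← Matrix.toLin_eq_toLin', LinearMap.toMatrix_toLin]
      rw [hB, ← hAf]
      rw [linearMap_toMatrix_mul_basis_toMatrix, basis_toMatrix_mul_linearMap_toMatrix]
    · rw [hEblocks]
      rw [Matrix.PosDef.fromBlocks₂₂ _ _ hE22]
      have hprod : ((t : ℂ) • r) * E₂₂⁻¹ * ((t : ℂ) • r)ᴴ = (t : ℂ) • ((t : ℂ) • X) := by
        rw [show ((t:ℂ) • r)ᴴ = (t : ℂ) • rᴴ by
          rw [Matrix.conjTranspose_smul]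
          congr 1
          simp [Complex.star_def, Complex.conj_ofReal]]
        rw [hX, Matrix.smul_mul, Matrix.mul_smul, Matrix.smul_mul]
      rw [hprod]
      apply one_dim_posSemidef
      have hval : ((s : ℂ) • (1 : Matrix (Fin 1) (Fin 1) ℂ)
          - (t : ℂ) • ((t : ℂ) • X)) 0 0 = ((s - t * t * C : ℝ) : ℂ) := by
        simp [Matrix.one_apply, hX00]
        push_cast
        ring
      rw [hval, Complex.zero_le_real]
      have hst : s - t * t * C = t ^ 2 := by
        rw [hs, ← ht1]
        ring
      rw [hst]
      positivity

lemma map_re_isHermitian {ι : Type*} [Fintype ι] {S : Matrix ι ι ℂ}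
    (h : S.IsHermitian) : (S.map Complex.re).IsHermitian := by
  ext i j
  have h1 : star (S j i) = S i j := by
    have h2 := congrFun (congrFun h i) j
    rwa [Matrix.conjTranspose_apply] at h2
  rw [Matrix.conjTranspose_apply, Matrix.map_apply, Matrix.map_apply, star_trivial,
    ← h1, Complex.star_def, Complex.conj_re]

lemma dot_re {ι : Type*} [Fintype ι] (S : Matrix ι ι ℂ) (x : ι → ℝ) :
    star x ⬝ᵥ (S.map Complex.re) *ᵥ x
      = (star (fun i => (x i : ℂ)) ⬝ᵥ S *ᵥ (fun i => (x i : ℂ))).re := by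
  simp only [dotProduct, Matrix.mulVec, Pi.star_apply, star_trivial, Complex.star_def,
    Complex.conj_ofReal, Complex.re_sum, Complex.mul_re, Complex.ofReal_re, Complex.ofReal_im,
    Matrix.map_apply]
  simp

lemma map_re_posDef {ι : Type*} [Fintype ι] {S : Matrix ι ι ℂ} (h : S.PosDef) :
    (S.map Complex.re).PosDef := by
  refine Matrix.PosDef.of_dotProduct_mulVec_pos (map_re_isHermitian h.1) fun x hx => ?_
  have hxc : (fun i => (x i : ℂ)) ≠ 0 := by
    intro h0
    apply hx
    funext i
    have h1 : ((x i : ℝ) : ℂ) = 0 := by simpa using congrFun h0 i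
    exact_mod_cast h1
  rw [dot_re]
  exact (Complex.pos_iff.mp (h.dotProduct_mulVec_pos hxc)).1

lemma map_re_posSemidef {ι : Type*} [Fintype ι] {S : Matrix ι ι ℂ} (h : S.PosSemidef) :
    (S.map Complex.re).PosSemidef := by
  refine Matrix.PosSemidef.of_dotProduct_mulVec_nonneg (map_re_isHermitian h.1) fun x => ?_
  rw [dot_re]
  exact (Complex.nonneg_iff.mp (h.dotProduct_mulVec_nonneg _)).1

end

end Stmt1Aux

/-- If some eigenvalue of `Q` with minimal real part `μ` is defective,
then for every `ε > 0` there exists a symmetric positive definite `P` with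
`P*Q + Qᵀ*P ≥ 2(μ-ε)•P`. -/
theorem stmt1 {d : ℕ} (Q : Matrix (Fin d) (Fin d) ℝ) (μ : ℝ)
    (hμ : IsLeast {r : ℝ | ∃ lam ∈ spectrum ℂ (Q.map Complex.ofReal), lam.re = r} μ)
    (hdef : ∃ lam ∈ spectrum ℂ (Q.map Complex.ofReal), lam.re = μ ∧
      Module.finrank ℂ
          (Module.End.eigenspace (Matrix.toLin' (Q.map Complex.ofReal)) lam)
        < (Matrix.charpoly (Q.map Complex.ofReal)).rootMultiplicity lam) :
    ∀ ε > 0, ∃ P : Matrix (Fin d) (Fin d) ℝ, P.PosDef ∧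
      (P * Q + Qᵀ * P - (2 * (μ - ε)) • P).PosSemidef := by
  intro ε hε
  set A : Matrix (Fin d) (Fin d) ℂ := Q.map Complex.ofReal with hA
  have hspec : ∀ z ∈ spectrum ℂ A, μ ≤ z.re := fun z hz => hμ.2 ⟨z, hz, rfl⟩
  obtain ⟨Pc, hPc, hSc⟩ := Stmt1Aux.key d A μ hspec (2 * (μ - ε)) (by linarith)
  have hAH : Aᴴ = Qᵀ.map Complex.ofReal := by
    ext i j
    simp [hA, Matrix.conjTranspose_apply, Complex.conj_ofReal]
  have hmat : Pc.map Complex.re * Q + Qᵀ * Pc.map Complex.re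
        - (2 * (μ - ε)) • Pc.map Complex.re
      = (Pc * A + Aᴴ * Pc - ((2 * (μ - ε) : ℝ) : ℂ) • Pc).map Complex.re := by
    rw [hAH]
    ext i j
    simp only [Matrix.sub_apply, Matrix.add_apply, Matrix.smul_apply, Matrix.map_apply,
      Matrix.mul_apply, Complex.re_sum, Complex.mul_re, Complex.ofReal_re, Complex.ofReal_im,
      smul_eq_mul, Complex.sub_re, Complex.add_re, hA]
    simp
  refine ⟨Pc.map Complex.re, Stmt1Aux.map_re_posDef hPc, ?_⟩
  rw [hmat]
  exact Stmt1Aux.map_re_posSemidef hSc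
end

section
/- Let D, C ∈ ℝ^{d×d} with D symmetric positive semi-definite of rank k ∈ {1,…,d}. The following are equivalent: (i) no non-trivial subspace of ker D is invariant under Cᵀ; (ii) there exist τ ∈ {0,…,d−k} and κ > 0 such that Σ_{j=0}^{τ} Cʲ D (Cᵀ)ʲ ≥ κ·I; (iii) there exists τ ∈ {0,…,d−k} such that the block matrix [D^{1/2}, C D^{1/2}, …, C^τ D^{1/2}] ∈ ℝ^{d×(τ+1)d} has rank d. -/
/-!
Write `G τ = ∑_{j ≤ τ} Cʲ D (Cᵀ)ʲ`. Since `D = D^{1/2} (D^{1/2})ᵀ`, `G τ = B Bᵀ` for the block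
matrix `B = [D^{1/2}, C D^{1/2}, …, C^τ D^{1/2}]`, so (ii) and (iii) both say that `G τ` is
positive definite. As `D ≥ 0`, `ker G τ = {x | D (Cᵀ)ʲ x = 0 for all j ≤ τ}`. These kernels
decrease, starting from `ker D` of dimension `d - k`, so they stabilise after at most `d - k`
strict drops; a stable kernel is `Cᵀ`-invariant and lies in `ker D`, hence is trivial under (i).
Conversely, a `Cᵀ`-invariant subspace of `ker D` lies in every `ker G τ`.
-/

open Matrix

open scoped ComplexOrder in
/-- The positive semidefinite square root of a positive semidefinite matrix
(removed from Mathlib; restored here with its December 2024 definition). -/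
noncomputable def Matrix.PosSemidef.sqrt {n 𝕜 : Type*} [Fintype n] [DecidableEq n] [RCLike 𝕜]
    {A : Matrix n n 𝕜} (hA : A.PosSemidef) : Matrix n n 𝕜 :=
  hA.1.eigenvectorUnitary.1 * diagonal ((↑) ∘ (√·) ∘ hA.1.eigenvalues) *
  (star hA.1.eigenvectorUnitary : Matrix n n 𝕜)

open Finset Module

theorem Submodule.exists_le_finrank_succ_eq_of_antitone {K V : Type*} [DivisionRing K]
    [AddCommGroup V] [Module K V] [FiniteDimensional K V] {U : ℕ → Submodule K V}
    (hU : Antitone U) : ∃ τ ≤ finrank K (U 0), U (τ + 1) = U τ := by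
  by_contra! hstrict
  have hdrop : ∀ τ ≤ finrank K (U 0) + 1, finrank K (U τ) + τ ≤ finrank K (U 0) := by
    intro τ hτ
    induction τ with
    | zero => simp
    | succ τ ih =>
      have hlt := Submodule.finrank_lt_finrank_of_lt
        ((hU (Nat.le_add_right τ 1)).lt_of_ne (hstrict τ (by omega)))
      have := ih (by omega)
      omega
  have := hdrop _ le_rfl
  omega

namespace Matrix

variable {n : Type*} [Fintype n] [DecidableEq n]

theorem rank_add_finrank_ker_toLin' {K : Type*} [Field K] (M : Matrix n n K) :
    M.rank + finrank K (LinearMap.ker (toLin' M)) = Fintype.card n := by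
  rw [toLin'_apply', rank, LinearMap.finrank_range_add_finrank_ker, finrank_fintype_fun_eq_card]

open scoped ComplexOrder

theorem PosSemidef.posDef_iff_ker_toLin'_eq_bot {𝕜 : Type*} [RCLike 𝕜] {M : Matrix n n 𝕜}
    (hM : M.PosSemidef) : M.PosDef ↔ LinearMap.ker (toLin' M) = ⊥ := by
  rw [hM.posDef_iff_isUnit, ← mulVec_injective_iff_isUnit, LinearMap.ker_eq_bot]
  rfl

theorem PosSemidef.sqrt_mul_conjTranspose_sqrt {𝕜 : Type*} [RCLike 𝕜] {A : Matrix n n 𝕜}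
    (hA : A.PosSemidef) : hA.sqrt * hA.sqrtᴴ = A := by
  have hsqrt : hA.sqrt = Unitary.conjStarAlgAut 𝕜 _ hA.1.eigenvectorUnitary
      (diagonal ((↑) ∘ (√·) ∘ hA.1.eigenvalues)) := rfl
  rw [← star_eq_conjTranspose, hsqrt, ← map_star, ← map_mul, star_eq_conjTranspose,
    diagonal_conjTranspose, diagonal_mul_diagonal]
  conv_rhs => rw [hA.1.spectral_theorem]
  congr 2
  ext i
  simp [← RCLike.ofReal_mul, Real.mul_self_sqrt (hA.eigenvalues_nonneg i)]

open scoped MatrixOrder in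
theorem PosDef.exists_pos_sub_smul_one_posSemidef {𝕜 : Type*} [RCLike 𝕜] {M : Matrix n n 𝕜}
    (hM : M.PosDef) : ∃ κ > (0 : ℝ), (M - κ • (1 : Matrix n n 𝕜)).PosSemidef := by
  have hspec := (StarOrderedRing.isStrictlyPositive_iff_spectrum_pos (R := ℝ) M).1
    hM.isStrictlyPositive
  obtain ⟨κ, hκ, hle⟩ : ∃ κ > (0 : ℝ), ∀ x ∈ spectrum ℝ M, κ ≤ x := by
    set s := insert 1 M.finite_real_spectrum.toFinset
    refine ⟨s.min' (insert_nonempty _ _), ?_, fun x hx => s.min'_le x (by simp [s, hx])⟩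
    rw [gt_iff_lt, lt_min'_iff]
    simpa [s] using hspec
  refine ⟨κ, hκ, ?_⟩
  rw [← Algebra.algebraMap_eq_smul_one, ← le_iff]
  exact algebraMap_le_of_le_spectrum hle

theorem posDef_iff_exists_pos_sub_smul_one_posSemidef {𝕜 : Type*} [RCLike 𝕜]
    {M : Matrix n n 𝕜} :
    M.PosDef ↔ ∃ κ > (0 : ℝ), (M - κ • (1 : Matrix n n 𝕜)).PosSemidef := by
  refine ⟨PosDef.exists_pos_sub_smul_one_posSemidef, fun ⟨κ, hκ, hsub⟩ => ?_⟩
  simpa using PosDef.posSemidef_add hsub (PosDef.one.smul hκ)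

section Controllability

variable {R : Type*} [CommSemiring R]

def controllabilityGramian (C D : Matrix n n R) (τ : ℕ) : Matrix n n R :=
  ∑ j ∈ range (τ + 1), C ^ j * D * Cᵀ ^ j

def controllabilityMatrix (C S : Matrix n n R) (τ : ℕ) : Matrix n (Fin (τ + 1) × n) R :=
  of fun i p => (C ^ (p.1 : ℕ) * S) i p.2

theorem controllabilityMatrix_mul_transpose (C S : Matrix n n R) (τ : ℕ) :
    controllabilityMatrix C S τ * (controllabilityMatrix C S τ)ᵀ =
      controllabilityGramian C (S * Sᵀ) τ := by
  have hterm : ∀ j : ℕ, C ^ j * (S * Sᵀ) * Cᵀ ^ j = C ^ j * S * (C ^ j * S)ᵀ := by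
    intro j
    rw [transpose_mul, transpose_pow, mul_assoc, mul_assoc, mul_assoc]
  simp_rw [controllabilityGramian, hterm,
    ← Fin.sum_univ_eq_sum_range (fun j => C ^ j * S * (C ^ j * S)ᵀ)]
  ext i l
  simp only [controllabilityMatrix, mul_apply, of_apply, transpose_apply, sum_apply,
    Fintype.sum_prod_type]

theorem dotProduct_controllabilityGramian_mulVec (C D : Matrix n n R) (τ : ℕ) (x : n → R) :
    x ⬝ᵥ controllabilityGramian C D τ *ᵥ x =
      ∑ j ∈ range (τ + 1), (Cᵀ ^ j *ᵥ x) ⬝ᵥ D *ᵥ (Cᵀ ^ j *ᵥ x) := by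
  simp only [controllabilityGramian, sum_mulVec, dotProduct_sum]
  refine sum_congr rfl fun j _ => ?_
  rw [← mulVec_mulVec, ← mulVec_mulVec, dotProduct_mulVec, ← mulVec_transpose, transpose_pow]

@[simp]
theorem controllabilityGramian_zero (C D : Matrix n n R) : controllabilityGramian C D 0 = D := by
  simp [controllabilityGramian]

end Controllability

variable {C D : Matrix n n ℝ}

theorem PosSemidef.controllabilityGramian (hD : D.PosSemidef) (C : Matrix n n ℝ) (τ : ℕ) :
    (controllabilityGramian C D τ).PosSemidef :=
  posSemidef_sum _ fun j _ => by
    simpa [conjTranspose_eq_transpose_of_trivial, transpose_pow]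
      using hD.mul_mul_conjTranspose_same (C ^ j)

theorem mem_ker_controllabilityGramian_iff (hD : D.PosSemidef) {τ : ℕ} {x : n → ℝ} :
    x ∈ LinearMap.ker (toLin' (controllabilityGramian C D τ)) ↔
      ∀ j ≤ τ, Cᵀ ^ j *ᵥ x ∈ LinearMap.ker (toLin' D) := by
  simp only [LinearMap.mem_ker, toLin'_apply]
  have hgram := (hD.controllabilityGramian C τ).dotProduct_mulVec_zero_iff x
  rw [star_trivial] at hgram
  rw [← hgram, dotProduct_controllabilityGramian_mulVec,
    sum_eq_zero_iff_of_nonneg fun j _ => by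
      simpa using hD.dotProduct_mulVec_nonneg (Cᵀ ^ j *ᵥ x)]
  simp only [mem_range, Nat.lt_succ_iff]
  refine forall₂_congr fun j _ => ?_
  simpa using hD.dotProduct_mulVec_zero_iff (Cᵀ ^ j *ᵥ x)

theorem antitone_ker_controllabilityGramian (hD : D.PosSemidef) (C : Matrix n n ℝ) :
    Antitone fun τ => LinearMap.ker (toLin' (controllabilityGramian C D τ)) :=
  fun _ _ hστ _ hx => (mem_ker_controllabilityGramian_iff hD).2 fun j hj =>
    (mem_ker_controllabilityGramian_iff hD).1 hx j (hj.trans hστ)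

theorem mulVec_mem_ker_controllabilityGramian_of_succ_eq (hD : D.PosSemidef) {τ : ℕ}
    (hstab : LinearMap.ker (toLin' (controllabilityGramian C D (τ + 1))) =
      LinearMap.ker (toLin' (controllabilityGramian C D τ)))
    {x : n → ℝ} (hx : x ∈ LinearMap.ker (toLin' (controllabilityGramian C D τ))) :
    Cᵀ *ᵥ x ∈ LinearMap.ker (toLin' (controllabilityGramian C D τ)) := by
  rw [← hstab, mem_ker_controllabilityGramian_iff hD] at hx
  rw [mem_ker_controllabilityGramian_iff hD]
  intro j hj
  simpa [mulVec_mulVec, ← pow_succ] using hx (j + 1) (by omega)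

theorem exists_le_posDef_controllabilityGramian (hD : D.PosSemidef)
    (hC : ∀ S : Submodule ℝ (n → ℝ), S ≤ LinearMap.ker (toLin' D) →
      (∀ x ∈ S, toLin' Cᵀ x ∈ S) → S = ⊥) :
    ∃ τ ≤ Fintype.card n - D.rank, (controllabilityGramian C D τ).PosDef := by
  obtain ⟨τ, hτ, hstab⟩ :=
    Submodule.exists_le_finrank_succ_eq_of_antitone (antitone_ker_controllabilityGramian hD C)
  refine ⟨τ, ?_, ?_⟩
  · have := D.rank_add_finrank_ker_toLin'
    rw [controllabilityGramian_zero] at hτ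
    omega
  · rw [(hD.controllabilityGramian C τ).posDef_iff_ker_toLin'_eq_bot]
    refine hC _ (fun x hx => ?_) fun x hx => ?_
    · simpa using (mem_ker_controllabilityGramian_iff hD).1 hx 0 τ.zero_le
    · exact mulVec_mem_ker_controllabilityGramian_of_succ_eq hD hstab hx

theorem eq_bot_of_posDef_controllabilityGramian (hD : D.PosSemidef) {τ : ℕ}
    (hpd : (controllabilityGramian C D τ).PosDef) {S : Submodule ℝ (n → ℝ)}
    (hSD : S ≤ LinearMap.ker (toLin' D)) (hSC : ∀ x ∈ S, toLin' Cᵀ x ∈ S) : S = ⊥ := by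
  have hpow : ∀ j, ∀ x ∈ S, Cᵀ ^ j *ᵥ x ∈ S := by
    intro j
    induction j with
    | zero => simp
    | succ j ih => exact fun x hx => by simpa [pow_succ', ← mulVec_mulVec] using hSC _ (ih x hx)
  rw [eq_bot_iff, ← hpd.posSemidef.posDef_iff_ker_toLin'_eq_bot.1 hpd]
  exact fun x hx => (mem_ker_controllabilityGramian_iff hD).2 fun j _ => hSD (hpow j x hx)

theorem rank_controllabilityMatrix_sqrt_eq_card_iff (hD : D.PosSemidef) {τ : ℕ} :
    (controllabilityMatrix C hD.sqrt τ).rank = Fintype.card n ↔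
      (controllabilityGramian C D τ).PosDef := by
  have hgram : controllabilityMatrix C hD.sqrt τ * (controllabilityMatrix C hD.sqrt τ)ᵀ =
      controllabilityGramian C D τ := by
    rw [controllabilityMatrix_mul_transpose, ← conjTranspose_eq_transpose_of_trivial,
      hD.sqrt_mul_conjTranspose_sqrt]
  rw [← rank_self_mul_transpose, hgram,
    (hD.controllabilityGramian C τ).posDef_iff_ker_toLin'_eq_bot, ← Submodule.finrank_eq_zero]
  have := (controllabilityGramian C D τ).rank_add_finrank_ker_toLin'
  omega

end Matrix

theorem stmt2_general {d : ℕ} (D C : Matrix (Fin d) (Fin d) ℝ) (hD : D.PosSemidef)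
    (k : ℕ) (hk : D.rank = k) :
    List.TFAE
      [ -- (i) no non-trivial subspace of ker D is invariant under Cᵀ
        (∀ S : Submodule ℝ (Fin d → ℝ), S ≤ LinearMap.ker (Matrix.toLin' D) →
          (∀ x ∈ S, (Matrix.toLin' Cᵀ) x ∈ S) → S = ⊥),
        -- (ii) ∃ τ ∈ {0,…,d-k}, κ > 0 with ∑_{j=0}^{τ} Cʲ D (Cᵀ)ʲ ≥ κ I
        (∃ τ ≤ d - k, ∃ κ > (0:ℝ),
          ((∑ j ∈ Finset.range (τ + 1), C ^ j * D * (Cᵀ) ^ j)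
            - κ • (1 : Matrix (Fin d) (Fin d) ℝ)).PosSemidef),
        -- (iii) ∃ τ ∈ {0,…,d-k} with rank [D^{1/2}, C D^{1/2}, …, C^τ D^{1/2}] = d
        (∃ τ ≤ d - k,
          (Matrix.of (fun (i : Fin d) (p : Fin (τ + 1) × Fin d) =>
            ((C ^ (p.1 : ℕ)) * hD.sqrt) i p.2)).rank = d) ] := by
  subst hk
  tfae_have 1 → 2 := fun hC => by
    obtain ⟨τ, hτ, hpd⟩ := exists_le_posDef_controllabilityGramian hD hC
    exact ⟨τ, by simpa using hτ, hpd.exists_pos_sub_smul_one_posSemidef⟩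
  tfae_have 2 → 1 := fun ⟨_, _, hκ⟩ _ hSD hSC =>
    eq_bot_of_posDef_controllabilityGramian hD
      (posDef_iff_exists_pos_sub_smul_one_posSemidef.2 hκ) hSD hSC
  tfae_have 2 ↔ 3 := exists_congr fun τ => and_congr_right fun _ => by
    rw [← posDef_iff_exists_pos_sub_smul_one_posSemidef]
    exact (rank_controllabilityMatrix_sqrt_eq_card_iff hD).symm.trans
      (by rw [Fintype.card_fin]; rfl)
  tfae_finish

/-- Equivalent characterizations of the hypoellipticity condition (A1). -/
theorem stmt2 {d : ℕ} (D C : Matrix (Fin d) (Fin d) ℝ) (hD : D.PosSemidef)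
    (k : ℕ) (hk : D.rank = k) (hk1 : 1 ≤ k) (hkd : k ≤ d) :
    List.TFAE
      [ -- (i) no non-trivial subspace of ker D is invariant under Cᵀ
        (∀ S : Submodule ℝ (Fin d → ℝ), S ≤ LinearMap.ker (Matrix.toLin' D) →
          (∀ x ∈ S, (Matrix.toLin' Cᵀ) x ∈ S) → S = ⊥),
        -- (ii) ∃ τ ∈ {0,…,d-k}, κ > 0 with ∑_{j=0}^{τ} Cʲ D (Cᵀ)ʲ ≥ κ I
        (∃ τ ≤ d - k, ∃ κ > (0:ℝ),
          ((∑ j ∈ Finset.range (τ + 1), C ^ j * D * (Cᵀ) ^ j)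
            - κ • (1 : Matrix (Fin d) (Fin d) ℝ)).PosSemidef),
        -- (iii) ∃ τ ∈ {0,…,d-k} with rank [D^{1/2}, C D^{1/2}, …, C^τ D^{1/2}] = d
        (∃ τ ≤ d - k,
          (Matrix.of (fun (i : Fin d) (p : Fin (τ + 1) × Fin d) =>
            ((C ^ (p.1 : ℕ)) * hD.sqrt) i p.2)).rank = d) ] :=
  stmt2_general D C hD k hk
end

section
/- Let C ∈ ℝ^{d×d} be a matrix whose symmetric part D := (1/2)(C + Cᵀ) is positive definite, and let λ_D be the smallest eigenvalue of D and μ := min{Re(λ) : λ eigenvalue of C}. Then 0 < λ_D ≤ μ. Moreover, if some eigenvalue λ of C with Re(λ) = μ is defective, then the inequality is strict: λ_D < μ. -/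
open Matrix Polynomial
open scoped ComplexOrder Pointwise

private lemma charpoly_shift {n R : Type*} [Fintype n] [DecidableEq n] [CommRing R]
    (M : Matrix n n R) (t : R) :
    (M - t • (1 : Matrix n n R)).charpoly = M.charpoly.comp (X + C t) := by
  have h1 : M.charpoly.comp (X + C t) = aeval (X + C t) M.charpoly := by
    rw [aeval_def, Polynomial.algebraMap_eq]; rfl
  rw [h1, Matrix.charpoly, Matrix.charpoly, AlgHom.map_det]
  congr 1
  rw [AlgHom.mapMatrix_apply]
  apply Matrix.ext
  intro i j
  by_cases h : i = j
  · subst h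
    simp [charmatrix_apply_eq, Matrix.sub_apply, Matrix.smul_apply, Matrix.one_apply_eq,
      Polynomial.algebraMap_eq]
    ring
  · simp [charmatrix_apply_ne _ _ _ h, Matrix.sub_apply, Matrix.smul_apply,
      Matrix.one_apply_ne h, Polynomial.algebraMap_eq]

set_option maxHeartbeats 800000 in
set_option synthInstance.maxHeartbeats 200000 in
private lemma rootMult_eq_finrank {d : ℕ} (M : Matrix (Fin d) (Fin d) ℂ) (t : ℂ) :
    M.charpoly.rootMultiplicity t =
      Module.finrank ℂ (Module.End.maxGenEigenspace (Matrix.toLin' M) t) := by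
  classical
  have hmat : LinearMap.toMatrix'
      ((Matrix.toLin' M - t • 1 : Module.End ℂ (Fin d → ℂ)) :
        (Fin d → ℂ) →ₗ[ℂ] (Fin d → ℂ)) = M - t • 1 := by
    have h1 : LinearMap.toMatrix' ((Matrix.toLin' M - t • 1 : Module.End ℂ (Fin d → ℂ)))
        = LinearMap.toMatrix' (Matrix.toLin' M)
          - LinearMap.toMatrix' (t • (1 : Module.End ℂ (Fin d → ℂ))) :=
      map_sub _ _ _
    have h2 : LinearMap.toMatrix' (t • (1 : Module.End ℂ (Fin d → ℂ))) = t • 1 := by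
      rw [_root_.map_smul, Module.End.one_eq_id, LinearMap.toMatrix'_id]
    rw [h1, h2, LinearMap.toMatrix'_toLin']
  have hcp : (Matrix.toLin' M - t • 1 : Module.End ℂ (Fin d → ℂ)).charpoly
      = (M - t • 1).charpoly := by
    rw [← hmat, ← LinearMap.toMatrix_eq_toMatrix']
    exact (LinearMap.charpoly_toMatrix _ (Pi.basisFun ℂ (Fin d))).symm
  have hspace : Module.End.maxGenEigenspace
        (Matrix.toLin' M - t • 1 : Module.End ℂ (Fin d → ℂ)) 0
      = Module.End.maxGenEigenspace (Matrix.toLin' M) t := by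
    ext x
    rw [Module.End.mem_maxGenEigenspace, Module.End.mem_maxGenEigenspace]
    simp
  calc M.charpoly.rootMultiplicity t
      = (M.charpoly.comp (X + C t)).natTrailingDegree := rootMultiplicity_eq_natTrailingDegree
    _ = (M - t • 1).charpoly.natTrailingDegree := by rw [charpoly_shift]
    _ = (Matrix.toLin' M - t • 1 : Module.End ℂ (Fin d → ℂ)).charpoly.natTrailingDegree := by
        rw [hcp]
    _ = Module.finrank ℂ (Module.End.maxGenEigenspace
          (Matrix.toLin' M - t • 1 : Module.End ℂ (Fin d → ℂ)) 0) :=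
        (LinearMap.finrank_maxGenEigenspace_zero_eq _).symm
    _ = _ := by rw [hspace]

private lemma exists_gen2 {d : ℕ} (M : Matrix (Fin d) (Fin d) ℂ) (t : ℂ)
    (hdef : Module.finrank ℂ (Module.End.eigenspace (Matrix.toLin' M) t)
      < M.charpoly.rootMultiplicity t) :
    ∃ u w : Fin d → ℂ, u ≠ 0 ∧ M *ᵥ u = t • u ∧ M *ᵥ w = t • w + u := by
  classical
  set g : Module.End ℂ (Fin d → ℂ) := Matrix.toLin' M - t • 1 with hg
  have hker1 : Module.End.eigenspace (Matrix.toLin' M) t = LinearMap.ker g :=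
    Module.End.eigenspace_def
  have hle : LinearMap.ker g ≤ LinearMap.ker (g ^ 2) := by
    intro x hx
    rw [LinearMap.mem_ker] at hx ⊢
    rw [pow_two, Module.End.mul_apply, hx, map_zero]
  have hne : LinearMap.ker g ≠ LinearMap.ker (g ^ 2) := by
    intro hcontra
    have hstab : ∀ k : ℕ, LinearMap.ker (g ^ (1 + k)) = LinearMap.ker g := by
      intro k
      have := Module.End.ker_pow_constant (f := g) (k := 1)
        (by simpa [pow_one] using hcontra) k
      simpa [pow_one] using this.symm
    have hmax : Module.End.maxGenEigenspace (Matrix.toLin' M) t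
        = Module.End.eigenspace (Matrix.toLin' M) t := by
      apply le_antisymm
      · intro x hx
        rw [Module.End.mem_maxGenEigenspace] at hx
        obtain ⟨k, hk⟩ := hx
        rw [hker1, LinearMap.mem_ker]
        rcases k with _ | k
        · have hx0 : x = 0 := by simpa using hk
          simp [hx0]
        · have hx2 : x ∈ LinearMap.ker (g ^ (1 + k)) := by
            rw [LinearMap.mem_ker, add_comm]
            exact hk
          rw [hstab k, LinearMap.mem_ker] at hx2
          exact hx2
      · intro x hx
        rw [Module.End.mem_maxGenEigenspace]
        refine ⟨1, ?_⟩
        rw [pow_one]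
        rwa [hker1, LinearMap.mem_ker] at hx
    rw [rootMult_eq_finrank, hmax] at hdef
    exact lt_irrefl _ hdef
  obtain ⟨w, hw2, hw1⟩ := SetLike.exists_of_lt (lt_of_le_of_ne hle hne)
  have hgapp : ∀ x : Fin d → ℂ, g x = M *ᵥ x - t • x := by
    intro x
    simp [hg, LinearMap.sub_apply, LinearMap.smul_apply, Module.End.one_apply,
      Matrix.toLin'_apply]
  have hgw0 : g (g w) = 0 := by
    have h2 := hw2
    rw [LinearMap.mem_ker, pow_two, Module.End.mul_apply] at h2
    exact h2
  refine ⟨g w, w, ?_, ?_, ?_⟩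
  · intro h0
    exact hw1 (LinearMap.mem_ker.mpr h0)
  · have h3 := hgw0
    rw [hgapp (g w), sub_eq_zero] at h3
    exact h3
  · rw [hgapp w]
    ring

private lemma real_map_mulVec_star {d : ℕ} (A : Matrix (Fin d) (Fin d) ℝ) (v : Fin d → ℂ) :
    (A.map Complex.ofReal) *ᵥ (star v) = star ((A.map Complex.ofReal) *ᵥ v) := by
  ext i
  simp [Matrix.mulVec, dotProduct, star_sum, star_mul', Complex.conj_ofReal]

/-- For `C` with positive definite symmetric part `D = (C+Cᵀ)/2`,
the smallest eigenvalue `λ_D` of `D` satisfies `0 < λ_D ≤ μ`, where `μ` is the minimal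
real part of the eigenvalues of `C`; with strict inequality if some eigenvalue of `C`
with real part `μ` is defective. -/
theorem stmt4 {d : ℕ} (C D : Matrix (Fin d) (Fin d) ℝ)
    (hDdef : D = ((1:ℝ)/2) • (C + Cᵀ)) (hD : D.PosDef)
    (lamD μ : ℝ)
    (hlamD : IsLeast (spectrum ℝ D) lamD)
    (hμ : IsLeast {r : ℝ | ∃ lam ∈ spectrum ℂ (C.map Complex.ofReal), lam.re = r} μ) :
    (0 < lamD ∧ lamD ≤ μ) ∧
    ((∃ lam ∈ spectrum ℂ (C.map Complex.ofReal), lam.re = μ ∧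
        Module.finrank ℂ
            (Module.End.eigenspace (Matrix.toLin' (C.map Complex.ofReal)) lam)
          < (Matrix.charpoly (C.map Complex.ofReal)).rootMultiplicity lam)
      → lamD < μ) := by
  classical
  have hDh : D.IsHermitian := hD.1
  -- positivity of lamD
  have hlam_pos : 0 < lamD := by
    have h2 := hlamD.1
    rw [hDh.spectrum_real_eq_range_eigenvalues] at h2
    obtain ⟨i, hi⟩ := h2
    rw [← hi]
    exact hD.eigenvalues_pos i
  -- the real matrix E = D - lamD • 1 is PSD
  have hEh : (D - lamD • (1 : Matrix (Fin d) (Fin d) ℝ)).IsHermitian := by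
    rw [Matrix.IsHermitian, conjTranspose_sub, conjTranspose_smul, conjTranspose_one,
      hDh.eq, star_trivial]
  have hEpsd : (D - lamD • (1 : Matrix (Fin d) (Fin d) ℝ)).PosSemidef := by
    apply hEh.posSemidef_iff_eigenvalues_nonneg.mpr
    intro i
    have hi := hEh.eigenvalues_mem_spectrum_real i
    have hshift : spectrum ℝ (D - lamD • (1 : Matrix (Fin d) (Fin d) ℝ))
        = spectrum ℝ D + ({-lamD} : Set ℝ) := by
      rw [spectrum.add_singleton_eq]
      congr 1
      rw [Algebra.algebraMap_eq_smul_one, neg_smul, ← sub_eq_add_neg]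
    rw [hshift, Set.mem_add] at hi
    obtain ⟨y, hy, z, hz, hyz⟩ := hi
    rw [Set.mem_singleton_iff] at hz
    subst hz
    have hly := hlamD.2 hy
    rw [← hyz, Pi.zero_apply]
    linarith
  -- complexified E is PSD
  have hEcsd : ((D - lamD • (1 : Matrix (Fin d) (Fin d) ℝ)).map Complex.ofReal).PosSemidef := by
    obtain ⟨B, hB⟩ : ∃ B : Matrix (Fin d) (Fin d) ℝ,
        D - lamD • (1 : Matrix (Fin d) (Fin d) ℝ) = Bᴴ * B := by
      open scoped MatrixOrder in
      exact CStarAlgebra.nonneg_iff_eq_star_mul_self.mp (nonneg_iff_posSemidef.mpr hEpsd)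
    have hEq : (D - lamD • (1 : Matrix (Fin d) (Fin d) ℝ)).map Complex.ofReal
        = (B.map Complex.ofReal)ᴴ * (B.map Complex.ofReal) := by
      rw [hB]
      ext i j
      simp [Matrix.mul_apply, Matrix.conjTranspose_apply, Matrix.map_apply,
        Complex.conj_ofReal, Complex.ofReal_sum, Complex.ofReal_mul]
    rw [hEq]
    exact Matrix.posSemidef_conjTranspose_mul_self _
  -- relation C + Cᵀ = 2 D (complexified)
  have hCD : C.map Complex.ofReal + Cᵀ.map Complex.ofReal
      = (2:ℂ) • (D.map Complex.ofReal) := by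
    ext i j
    have h0 : D i j = (1/2) * (C i j + C j i) := by
      rw [hDdef]; simp [Matrix.smul_apply, Matrix.add_apply, Matrix.transpose_apply]
    simp only [Matrix.add_apply, Matrix.map_apply, Matrix.smul_apply,
      Matrix.transpose_apply, smul_eq_mul, h0]
    push_cast
    ring
  -- E (complexified) in terms of Dc
  have hEvec : ∀ v : Fin d → ℂ,
      ((D - lamD • (1 : Matrix (Fin d) (Fin d) ℝ)).map Complex.ofReal) *ᵥ v
        = (D.map Complex.ofReal) *ᵥ v - (lamD : ℂ) • v := by
    intro v
    have hEDc : (D - lamD • (1 : Matrix (Fin d) (Fin d) ℝ)).map Complex.ofReal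
        = D.map Complex.ofReal - (lamD : ℂ) • 1 := by
      ext i j
      by_cases h : i = j <;>
        simp [Matrix.map_apply, Matrix.sub_apply, Matrix.smul_apply, Matrix.one_apply, h]
    rw [hEDc, Matrix.sub_mulVec, Matrix.smul_mulVec, Matrix.one_mulVec]
  -- quadratic identity for eigenvectors
  have hquad : ∀ (lam : ℂ) (v : Fin d → ℂ), (C.map Complex.ofReal) *ᵥ v = lam • v →
      star v ⬝ᵥ (((D - lamD • (1 : Matrix (Fin d) (Fin d) ℝ)).map Complex.ofReal) *ᵥ v)
        = ((lam.re - lamD : ℝ) : ℂ) * (star v ⬝ᵥ v) := by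
    intro lam v hv
    have hs : star v ⬝ᵥ ((C.map Complex.ofReal) *ᵥ v) = lam * (star v ⬝ᵥ v) := by
      rw [hv, dotProduct_smul, smul_eq_mul]
    have hst : star v ⬝ᵥ ((Cᵀ.map Complex.ofReal) *ᵥ v)
        = (starRingEnd ℂ) lam * (star v ⬝ᵥ v) := by
      rw [Matrix.transpose_map, Matrix.dotProduct_mulVec, Matrix.vecMul_transpose,
        real_map_mulVec_star, hv, star_smul, smul_dotProduct]
      simp [smul_eq_mul]
    have hDv : star v ⬝ᵥ ((D.map Complex.ofReal) *ᵥ v)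
        = ((lam.re : ℝ) : ℂ) * (star v ⬝ᵥ v) := by
      have h2 : star v ⬝ᵥ (((2:ℂ) • (D.map Complex.ofReal)) *ᵥ v)
          = (lam + (starRingEnd ℂ) lam) * (star v ⬝ᵥ v) := by
        rw [← hCD, Matrix.add_mulVec, dotProduct_add, hs, hst]
        ring
      rw [Matrix.smul_mulVec, dotProduct_smul, smul_eq_mul] at h2
      rw [Complex.add_conj lam] at h2
      push_cast at h2
      rw [mul_assoc] at h2
      exact mul_left_cancel₀ two_ne_zero h2
    rw [hEvec v, dotProduct_sub, hDv, dotProduct_smul, smul_eq_mul]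
    push_cast
    ring
  -- eigenvectors from spectrum membership
  have heig : ∀ lam ∈ spectrum ℂ (C.map Complex.ofReal),
      ∃ v : Fin d → ℂ, v ≠ 0 ∧ (C.map Complex.ofReal) *ᵥ v = lam • v := by
    intro lam hlam
    rw [spectrum.mem_iff] at hlam
    have hdet : (lam • (1 : Matrix (Fin d) (Fin d) ℂ) - C.map Complex.ofReal).det = 0 := by
      by_contra hdet
      exact hlam (by
        rw [Algebra.algebraMap_eq_smul_one]
        exact (Matrix.isUnit_iff_isUnit_det _).mpr (isUnit_iff_ne_zero.mpr hdet))
    obtain ⟨v, hv0, hv⟩ := (Matrix.exists_mulVec_eq_zero_iff).mpr hdet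
    refine ⟨v, hv0, ?_⟩
    rw [Matrix.sub_mulVec, Matrix.smul_mulVec, Matrix.one_mulVec, sub_eq_zero] at hv
    exact hv.symm
  -- real positivity of star v ⬝ᵥ v
  have hsfact : ∀ v : Fin d → ℂ, v ≠ 0 →
      (star v ⬝ᵥ v).im = 0 ∧ 0 < (star v ⬝ᵥ v).re := by
    intro v hv0
    have hnn : (0:ℂ) ≤ star v ⬝ᵥ v := dotProduct_star_self_nonneg v
    rw [Complex.le_def] at hnn
    have hne : star v ⬝ᵥ v ≠ 0 := fun h => hv0 (dotProduct_star_self_eq_zero.mp h)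
    refine ⟨hnn.2.symm, ?_⟩
    rcases lt_or_eq_of_le hnn.1 with h | h
    · simpa using h
    · exfalso
      exact hne (Complex.ext (by simpa using h.symm) hnn.2.symm)
  -- key inequality
  have hkey : ∀ lam ∈ spectrum ℂ (C.map Complex.ofReal), lamD ≤ lam.re := by
    intro lam hlam
    obtain ⟨v, hv0, hv⟩ := heig lam hlam
    have hq := hquad lam v hv
    have hpos := hEcsd.dotProduct_mulVec_nonneg v
    rw [hq, Complex.le_def] at hpos
    obtain ⟨him, hre⟩ := hsfact v hv0
    have hmul : ((((lam.re - lamD : ℝ)) : ℂ) * (star v ⬝ᵥ v)).re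
        = (lam.re - lamD) * (star v ⬝ᵥ v).re := by
      rw [Complex.mul_re]
      simp [him]
    rw [hmul] at hpos
    simp only [Complex.zero_re] at hpos
    nlinarith [hpos.1]
  have hle : lamD ≤ μ := by
    obtain ⟨lam, hlam, hre⟩ := hμ.1
    rw [← hre]
    exact hkey lam hlam
  refine ⟨⟨hlam_pos, hle⟩, ?_⟩
  rintro ⟨lam, hlam, hre, hdefect⟩
  rcases lt_or_eq_of_le hle with h | h
  · exact h
  exfalso
  obtain ⟨u, w, hu0, huu, hww⟩ := exists_gen2 (C.map Complex.ofReal) lam hdefect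
  have hre' : (lam.re : ℝ) = lamD := by rw [hre, ← h]
  have hzero : star u ⬝ᵥ (((D - lamD • (1 : Matrix (Fin d) (Fin d) ℝ)).map Complex.ofReal) *ᵥ u)
      = 0 := by
    rw [hquad lam u huu, hre']
    simp
  have hEu : ((D - lamD • (1 : Matrix (Fin d) (Fin d) ℝ)).map Complex.ofReal) *ᵥ u = 0 :=
    (hEcsd.dotProduct_mulVec_zero_iff u).mp hzero
  have hDu : (D.map Complex.ofReal) *ᵥ u = (lamD : ℂ) • u := by
    have h4 := hEvec u
    rw [hEu] at h4
    exact sub_eq_zero.mp h4.symm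
  have hCt : (Cᵀ.map Complex.ofReal) *ᵥ u = ((starRingEnd ℂ) lam) • u := by
    have hsum : (C.map Complex.ofReal) *ᵥ u + (Cᵀ.map Complex.ofReal) *ᵥ u
        = ((2:ℂ) • (D.map Complex.ofReal)) *ᵥ u := by
      rw [← Matrix.add_mulVec, hCD]
    rw [huu, Matrix.smul_mulVec, hDu] at hsum
    have hX : (Cᵀ.map Complex.ofReal) *ᵥ u = (2:ℂ) • ((lamD:ℂ) • u) - lam • u := by
      rw [← hsum]; abel
    have hconj : (starRingEnd ℂ) lam = 2 * (lamD : ℂ) - lam := by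
      have h5 := Complex.add_conj lam
      rw [hre'] at h5
      push_cast at h5 ⊢
      linear_combination h5
    rw [hX, hconj, smul_smul, ← sub_smul]
  have hw1 : star u ⬝ᵥ ((C.map Complex.ofReal) *ᵥ w)
      = lam * (star u ⬝ᵥ w) + star u ⬝ᵥ u := by
    rw [hww, dotProduct_add, dotProduct_smul, smul_eq_mul]
  have hw2 : star u ⬝ᵥ ((C.map Complex.ofReal) *ᵥ w) = lam * (star u ⬝ᵥ w) := by
    rw [Matrix.dotProduct_mulVec]
    have hvecmul : star u ᵥ* (C.map Complex.ofReal) = lam • star u := by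
      rw [← Matrix.mulVec_transpose, ← Matrix.transpose_map, real_map_mulVec_star, hCt,
        star_smul]
      simp
    rw [hvecmul, smul_dotProduct, smul_eq_mul]
  have hzero2 : star u ⬝ᵥ u = 0 := by
    have h6 := hw1.symm.trans hw2
    linear_combination h6
  exact hu0 (dotProduct_star_self_eq_zero.mp hzero2)
end

section
/- Fix ν > 0. Let p₁₂ ≥ 0, p₂₂ > p₁₂², κ ≥ 0, and suppose that for some γ₀ > 0 the matrix Q_{γ₀} P + P Q_{γ₀}ᵀ − 2κ P is positive semi-definite, where Q_γ = [[0,1],[−γ,ν]] and P = [[1,p₁₂],[p₁₂,p₂₂]], and additionally p₁₂ ≥ κ. Then κ ≤ ν/2. -/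
/-!
Test the inequality against `v = (p₁₂, -1)`, which `P` maps to `-(p₂₂ - p₁₂²) e₂`. Since `P` is
symmetric, `vᵀ(QP + PQᵀ)v = 2 vᵀQ(Pv)`, and the second column of `Q_γ` is `(1, ν)`: the quadratic form
equals `2 (p₂₂ - p₁₂²)(ν - p₁₂ - κ)`, independently of `γ`. Positivity of `p₂₂ - p₁₂²` then gives
`2κ ≤ κ + p₁₂ ≤ ν`.
-/

open Matrix

theorem Matrix.dotProduct_mulVec_mul_add_mul_transpose {n R : Type*} [Fintype n] [CommRing R]
    {P : Matrix n n R} (hP : Pᵀ = P) (Q : Matrix n n R) (v : n → R) :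
    v ⬝ᵥ ((Q * P + P * Qᵀ) *ᵥ v) = 2 * (v ⬝ᵥ Q *ᵥ (P *ᵥ v)) := by
  have hsymm : v ⬝ᵥ (P * Qᵀ) *ᵥ v = v ⬝ᵥ (Q * P) *ᵥ v := by
    rw [← hP, ← transpose_mul, dotProduct_mulVec, vecMul_transpose, dotProduct_comm, hP]
  rw [add_mulVec, dotProduct_add, hsymm, ← mulVec_mulVec]
  ring

theorem lyapunov_quadForm_eq (ν κ p12 p22 γ : ℝ) :
    ![p12, -1] ⬝ᵥ (((!![0, 1; -γ, ν] : Matrix (Fin 2) (Fin 2) ℝ) * !![1, p12; p12, p22]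
        + !![1, p12; p12, p22] * (!![0, 1; -γ, ν] : Matrix (Fin 2) (Fin 2) ℝ)ᵀ
        - (2 * κ) • !![1, p12; p12, p22]) *ᵥ ![p12, -1])
      = 2 * (p22 - p12 ^ 2) * (ν - p12 - κ) := by
  have hPv : !![1, p12; p12, p22] *ᵥ ![p12, -1] = ![0, -(p22 - p12 ^ 2)] := by
    ext i; fin_cases i <;> simp [mulVec, dotProduct, Fin.sum_univ_two]; ring
  have hPsymm : (!![1, p12; p12, p22] : Matrix (Fin 2) (Fin 2) ℝ)ᵀ = !![1, p12; p12, p22] := by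
    ext i j; fin_cases i <;> fin_cases j <;> rfl
  rw [sub_mulVec, dotProduct_sub, dotProduct_mulVec_mul_add_mul_transpose hPsymm, smul_mulVec,
    dotProduct_smul, hPv]
  simp only [mulVec, dotProduct, Fin.sum_univ_two, of_apply, cons_val', cons_val_zero, cons_val_one,
    cons_val_fin_one]
  ring

theorem stmt7_general (ν κ p12 p22 γ₀ : ℝ)
    (hP : p12 ^ 2 < p22) (hκp : κ ≤ p12)
    (hpsd : ((!![0, 1; -γ₀, ν] : Matrix (Fin 2) (Fin 2) ℝ) * !![1, p12; p12, p22]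
        + !![1, p12; p12, p22] * (!![0, 1; -γ₀, ν] : Matrix (Fin 2) (Fin 2) ℝ)ᵀ
        - (2 * κ) • !![1, p12; p12, p22]).PosSemidef) :
    κ ≤ ν / 2 := by
  have hform := hpsd.dotProduct_mulVec_nonneg ![p12, -1]
  rw [star_trivial, lyapunov_quadForm_eq] at hform
  have hgap : p12 + κ ≤ ν := by nlinarith [sub_pos.2 hP]
  linarith

/-- admissibility of `(p₁₂,p₂₂)` for some `γ₀ > 0` forces `κ ≤ ν/2`. -/
theorem stmt7 (ν κ p12 p22 γ₀ : ℝ) (hν : 0 < ν)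
    (hp12 : 0 ≤ p12) (hP : p12 ^ 2 < p22) (hκ : 0 ≤ κ) (hκp : κ ≤ p12)
    (hγ₀ : 0 < γ₀)
    (hpsd : ((!![0, 1; -γ₀, ν] : Matrix (Fin 2) (Fin 2) ℝ) * !![1, p12; p12, p22]
        + !![1, p12; p12, p22] * (!![0, 1; -γ₀, ν] : Matrix (Fin 2) (Fin 2) ℝ)ᵀ
        - (2 * κ) • !![1, p12; p12, p22]).PosSemidef) :
    κ ≤ ν / 2 :=
  stmt7_general ν κ p12 p22 γ₀ hP hκp hpsd
end

section
/- Fix ν > 0. Let P = [[1,p₁₂],[p₁₂,p₂₂]] with p₂₂ > p₁₂² and let κ ≥ 0 with p₁₂ ≥ κ. Suppose for some γ the determinant condition δ(κ,γ) = 4(p₁₂−κ)(−γ p₁₂ + (ν−κ)p₂₂) − (−γ + (ν−2κ)p₁₂ + p₂₂)² ≥ 0 holds together with −γ p₁₂ + (ν−κ)p₂₂ ≥ 0 and the corresponding eigenvalue-style conditions (so that (p₁₂,p₂₂) is admissible for κ and γ). Then p₁₂ ≤ ν − κ. -/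
/-!
Write `a = p₁₂ - κ` and `B₀ = (ν - 2κ) p₁₂ + p₂₂`. Completing the square in `γ` gives
`δ(κ, γ) + (γ - B₀ + 2 a p₁₂)² = 4 a (ν - κ - p₁₂) (p₂₂ - p₁₂²)`, so for `a > 0` the sign of
`ν - κ - p₁₂` is forced by `δ ≥ 0` and `p₂₂ > p₁₂²`. For `a = 0` the determinant is `-(γ - B₀)²`,
which pins down `γ = B₀`, and then (C5) reads `(ν - 2κ)(p₂₂ - κ²) ≥ 0`.
-/

/-- The paper's `δ(κ, γ)`. -/
def admissibleDet (ν κ p12 p22 γ : ℝ) : ℝ :=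
  4 * (p12 - κ) * (-γ * p12 + (ν - κ) * p22) - (-γ + (ν - 2 * κ) * p12 + p22) ^ 2

theorem admissibleDet_add_sq (ν κ p12 p22 γ : ℝ) :
    admissibleDet ν κ p12 p22 γ + (γ - ((ν - 2 * κ) * p12 + p22) + 2 * (p12 - κ) * p12) ^ 2
      = 4 * (p12 - κ) * ((ν - κ - p12) * (p22 - p12 ^ 2)) := by
  unfold admissibleDet
  ring

theorem le_sub_of_admissibleDet_nonneg {ν κ p12 p22 γ : ℝ} (hκp : κ < p12) (hP : p12 ^ 2 < p22)
    (hdelta : 0 ≤ admissibleDet ν κ p12 p22 γ) : p12 ≤ ν - κ := by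
  have hprod : 0 ≤ 4 * (p12 - κ) * ((ν - κ - p12) * (p22 - p12 ^ 2)) := by
    rw [← admissibleDet_add_sq ν κ p12 p22 γ]
    positivity
  have hfactor : 0 ≤ (ν - κ - p12) * (p22 - p12 ^ 2) :=
    nonneg_of_mul_nonneg_right hprod (by linarith)
  linarith [nonneg_of_mul_nonneg_left hfactor (by linarith)]

theorem admissibleDet_self (ν κ p22 γ : ℝ) :
    admissibleDet ν κ κ p22 γ = -(γ - ((ν - 2 * κ) * κ + p22)) ^ 2 := by
  unfold admissibleDet
  ring

theorem le_sub_of_admissibleDet_nonneg_self {ν κ p22 γ : ℝ} (hP : κ ^ 2 < p22)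
    (hdelta : 0 ≤ admissibleDet ν κ κ p22 γ) (hC5 : 0 ≤ -γ * κ + (ν - κ) * p22) :
    κ ≤ ν - κ := by
  have hγ : γ = (ν - 2 * κ) * κ + p22 := by
    rw [admissibleDet_self] at hdelta
    have hsq : (γ - ((ν - 2 * κ) * κ + p22)) ^ 2 = 0 :=
      le_antisymm (by linarith) (sq_nonneg _)
    exact sub_eq_zero.1 (pow_eq_zero_iff two_ne_zero |>.1 hsq)
  have hfactor : 0 ≤ (ν - 2 * κ) * (p22 - κ ^ 2) := by
    subst hγ
    linarith
  linarith [nonneg_of_mul_nonneg_left hfactor (by linarith)]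

theorem stmt8_general (ν κ p12 p22 γ : ℝ) (hP : p12 ^ 2 < p22) (hκp : κ ≤ p12)
    (hdelta : 0 ≤ 4 * (p12 - κ) * (-γ * p12 + (ν - κ) * p22)
        - (-γ + (ν - 2 * κ) * p12 + p22) ^ 2)
    (hC5 : 0 ≤ -γ * p12 + (ν - κ) * p22) :
    p12 ≤ ν - κ := by
  rcases hκp.lt_or_eq with hlt | rfl
  · exact le_sub_of_admissibleDet_nonneg hlt hP hdelta
  · exact le_sub_of_admissibleDet_nonneg_self hP hdelta hC5

/-- admissibility conditions (C1)–(C5) for some `γ > 0` force `p₁₂ ≤ ν - κ`. -/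
theorem stmt8 (ν κ p12 p22 γ : ℝ) (hν : 0 < ν)
    (hp12 : 0 ≤ p12) (hP : p12 ^ 2 < p22) (hκ : 0 ≤ κ) (hκp : κ ≤ p12)
    (hγ : 0 < γ)
    (hdelta : 0 ≤ 4 * (p12 - κ) * (-γ * p12 + (ν - κ) * p22)
        - (-γ + (ν - 2 * κ) * p12 + p22) ^ 2)
    (hC5 : 0 ≤ -γ * p12 + (ν - κ) * p22) :
    p12 ≤ ν - κ :=
  stmt8_general ν κ p12 p22 γ hP hκp hdelta hC5
end

section
/- Let ν > 0 and 0 ≤ γ₁ < γ₂. There exists a symmetric positive definite matrix P = [[1,p₁₂],[p₁₂,p₂₂]] such that Q_γ P + P Q_γᵀ is positive semi-definite for all γ ∈ [γ₁, γ₂] (where Q_γ = [[0,1],[−γ,ν]]) if and only if √γ₂ − √γ₁ ≤ ν. -/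
/-!
Put `r = q - p²` and `c = p (ν - p)`. The determinant of `Q_γ P + P Q_γᵀ` equals
`4 r c - (γ - (r + c))²`, so with `r = σ²`, `c = k²` the admissible `γ` fill the interval
`[(σ - k)², (σ + k)²]`. Its endpoints have square roots `|σ - k|` and `σ + k`, at most `2k` apart,
and `4 k² = 4 p (ν - p) ≤ ν²`. Conversely, `p = ν / 2` gives `k = ν / 2`, and `σ` can be chosen
so that the interval covers `[γ₁, γ₂]` exactly when `√γ₂ - √γ₁ ≤ ν`.
-/

open Matrix

namespace Matrix

lemma isHermitian_fin_two_symm (a b c : ℝ) : (!![a, b; b, c]).IsHermitian := by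
  ext i j
  fin_cases i <;> fin_cases j <;> simp

lemma mul_dotProduct_mulVec_fin_two_symm (a b c : ℝ) (x : Fin 2 → ℝ) :
    a * (star x ⬝ᵥ (!![a, b; b, c] *ᵥ x))
      = (a * x 0 + b * x 1) ^ 2 + (a * c - b ^ 2) * x 1 ^ 2 := by
  simp only [star_trivial, dotProduct, mulVec, Fin.sum_univ_two, cons_val_zero, cons_val_one,
    of_apply, cons_val', empty_val', cons_val_fin_one]
  ring

lemma posSemidef_fin_two_of_pos_of_sq_le {a b c : ℝ} (ha : 0 < a) (h : b ^ 2 ≤ a * c) :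
    (!![a, b; b, c]).PosSemidef := by
  refine .of_dotProduct_mulVec_nonneg (isHermitian_fin_two_symm a b c) fun x => ?_
  refine nonneg_of_mul_nonneg_right ?_ ha
  rw [mul_dotProduct_mulVec_fin_two_symm]
  linarith [sq_nonneg (a * x 0 + b * x 1), mul_nonneg (sub_nonneg.2 h) (sq_nonneg (x 1))]

lemma posDef_fin_two_of_pos_of_sq_lt {a b c : ℝ} (ha : 0 < a) (h : b ^ 2 < a * c) :
    (!![a, b; b, c]).PosDef := by
  refine .of_dotProduct_mulVec_pos (isHermitian_fin_two_symm a b c) fun x hx => ?_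
  refine pos_of_mul_pos_right ?_ ha.le
  rw [mul_dotProduct_mulVec_fin_two_symm]
  rcases eq_or_ne (x 1) 0 with h1 | h1
  · have h0 : x 0 ≠ 0 := fun h0 => hx (funext fun i => by fin_cases i <;> simp [h0, h1])
    rw [h1]
    ring_nf
    positivity
  · linarith [sq_nonneg (a * x 0 + b * x 1), mul_pos (sub_pos.2 h) (sq_pos_of_ne_zero h1)]

end Matrix

lemma lyapunov_fin_two_eq (ν γ p q : ℝ) :
    (!![0, 1; -γ, ν] : Matrix (Fin 2) (Fin 2) ℝ) * !![1, p; p, q]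
        + !![1, p; p, q] * (!![0, 1; -γ, ν] : Matrix (Fin 2) (Fin 2) ℝ)ᵀ
      = !![2 * p, q - γ + ν * p; q - γ + ν * p, 2 * (ν * q - γ * p)] := by
  ext i j
  fin_cases i <;> fin_cases j <;> simp [vecMul, dotProduct, Fin.sum_univ_two] <;> ring

lemma discr_le_of_posSemidef_lyapunov {ν γ p q : ℝ}
    (h : ((!![0, 1; -γ, ν] : Matrix (Fin 2) (Fin 2) ℝ) * !![1, p; p, q]
        + !![1, p; p, q] * (!![0, 1; -γ, ν] : Matrix (Fin 2) (Fin 2) ℝ)ᵀ).PosSemidef) :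
    (γ - (q - p ^ 2 + p * (ν - p))) ^ 2 ≤ 4 * (q - p ^ 2) * (p * (ν - p)) := by
  have hdet := h.det_nonneg
  rw [lyapunov_fin_two_eq, det_fin_two_of] at hdet
  linear_combination hdet

lemma posSemidef_lyapunov_of_discr_le {ν γ p q : ℝ} (hp : 0 < p)
    (h : (γ - (q - p ^ 2 + p * (ν - p))) ^ 2 ≤ 4 * (q - p ^ 2) * (p * (ν - p))) :
    ((!![0, 1; -γ, ν] : Matrix (Fin 2) (Fin 2) ℝ) * !![1, p; p, q]
        + !![1, p; p, q] * (!![0, 1; -γ, ν] : Matrix (Fin 2) (Fin 2) ℝ)ᵀ).PosSemidef := by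
  rw [lyapunov_fin_two_eq]
  exact posSemidef_fin_two_of_pos_of_sq_le (by positivity) (by linear_combination h)

lemma sq_sub_le_iff_mem_Icc {σ k γ : ℝ} (h : 0 ≤ σ * k) :
    (γ - (σ ^ 2 + k ^ 2)) ^ 2 ≤ 4 * σ ^ 2 * k ^ 2
      ↔ γ ∈ Set.Icc ((σ - k) ^ 2) ((σ + k) ^ 2) := by
  rw [show 4 * σ ^ 2 * k ^ 2 = (2 * (σ * k)) ^ 2 by ring, sq_le_sq,
    abs_of_nonneg (a := 2 * (σ * k)) (by positivity), abs_le]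
  constructor <;> rintro ⟨h₁, h₂⟩ <;> constructor <;> linarith

lemma Real.sqrt_sub_sqrt_le_abs_sub {a b x y : ℝ} (hx : a ^ 2 ≤ x) (hy : y ≤ b ^ 2) :
    √y - √x ≤ |b - a| := by
  calc √y - √x ≤ |b| - |a| := by
        gcongr
        · simpa only [Real.sqrt_sq_eq_abs] using Real.sqrt_le_sqrt hy
        · exact Real.abs_le_sqrt hx
    _ ≤ |b - a| := abs_sub_abs_le_abs_sub b a

lemma sqrt_sub_sqrt_le_of_discr_le {ν r c γ₁ γ₂ : ℝ} (hν : 0 ≤ ν) (hr : 0 < r)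
    (hc : 4 * c ≤ ν ^ 2) (h₁ : (γ₁ - (r + c)) ^ 2 ≤ 4 * r * c)
    (h₂ : (γ₂ - (r + c)) ^ 2 ≤ 4 * r * c) :
    √γ₂ - √γ₁ ≤ ν := by
  have hc₀ : 0 ≤ c := by nlinarith [sq_nonneg (γ₁ - (r + c))]
  obtain ⟨σ, hσ, rfl⟩ : ∃ σ, 0 ≤ σ ∧ σ ^ 2 = r := ⟨√r, Real.sqrt_nonneg r, Real.sq_sqrt hr.le⟩
  obtain ⟨k, hk, rfl⟩ : ∃ k, 0 ≤ k ∧ k ^ 2 = c := ⟨√c, Real.sqrt_nonneg c, Real.sq_sqrt hc₀⟩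
  have hσk : 0 ≤ σ * k := mul_nonneg hσ hk
  calc √γ₂ - √γ₁ ≤ |(σ + k) - (σ - k)| :=
        Real.sqrt_sub_sqrt_le_abs_sub ((sq_sub_le_iff_mem_Icc hσk).1 h₁).1
          ((sq_sub_le_iff_mem_Icc hσk).1 h₂).2
    _ = 2 * k := by rw [add_sub_sub_cancel, ← two_mul, abs_of_nonneg (by positivity)]
    _ ≤ ν := by nlinarith

lemma exists_pos_sq_sub_le_and_le_sq_add {γ₁ γ₂ k : ℝ} (hγ₁ : 0 ≤ γ₁) (hγ : γ₁ < γ₂)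
    (h : √γ₂ - √γ₁ ≤ 2 * k) :
    ∃ σ > 0, (σ - k) ^ 2 ≤ γ₁ ∧ γ₂ ≤ (σ + k) ^ 2 := by
  have hlt : √γ₁ < √γ₂ := Real.sqrt_lt_sqrt hγ₁ hγ
  have h₀ : 0 ≤ √γ₁ := Real.sqrt_nonneg γ₁
  set σ := max (√γ₂ - k) (k - √γ₁)
  have hσ₂ : √γ₂ - k ≤ σ := le_max_left _ _
  have hσ₁ : k - √γ₁ ≤ σ := le_max_right _ _
  refine ⟨σ, ?_, ?_, ?_⟩
  · rcases le_or_gt k √γ₁ with hk | hk <;> linarith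
  · rw [← Real.sq_sqrt hγ₁]
    exact sq_le_sq' (by linarith) (sub_le_iff_le_add.2 (max_le (by linarith) (by linarith)))
  · rw [← Real.sq_sqrt (hγ₁.trans hγ.le)]
    exact pow_le_pow_left₀ (Real.sqrt_nonneg _) (by linarith) 2

/-- Existence of a uniform matrix `P` for all `γ ∈ [γ₁,γ₂]` iff
`√γ₂ - √γ₁ ≤ ν`. -/
theorem stmt9 (ν γ₁ γ₂ : ℝ) (hν : 0 < ν) (hγ₁ : 0 ≤ γ₁) (hγ : γ₁ < γ₂) :
    (∃ p12 p22 : ℝ,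
      (!![1, p12; p12, p22] : Matrix (Fin 2) (Fin 2) ℝ).PosDef ∧
      ∀ γ ∈ Set.Icc γ₁ γ₂,
        ((!![0, 1; -γ, ν] : Matrix (Fin 2) (Fin 2) ℝ) * !![1, p12; p12, p22]
          + !![1, p12; p12, p22] * (!![0, 1; -γ, ν] : Matrix (Fin 2) (Fin 2) ℝ)ᵀ).PosSemidef)
    ↔ Real.sqrt γ₂ - Real.sqrt γ₁ ≤ ν := by
  constructor
  · rintro ⟨p, q, hP, hS⟩
    have hr : 0 < q - p ^ 2 := by
      have hdet := hP.det_pos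
      rw [det_fin_two_of] at hdet
      linarith
    exact sqrt_sub_sqrt_le_of_discr_le hν.le hr (by nlinarith [sq_nonneg (ν - 2 * p)])
      (discr_le_of_posSemidef_lyapunov (hS γ₁ ⟨le_rfl, hγ.le⟩))
      (discr_le_of_posSemidef_lyapunov (hS γ₂ ⟨hγ.le, le_rfl⟩))
  · intro h
    obtain ⟨σ, hσ, h₁, h₂⟩ :=
      exists_pos_sq_sub_le_and_le_sq_add (k := ν / 2) hγ₁ hγ (by linarith)
    refine ⟨ν / 2, σ ^ 2 + (ν / 2) ^ 2, posDef_fin_two_of_pos_of_sq_lt one_pos (by nlinarith),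
      fun γ hγ' => posSemidef_lyapunov_of_discr_le (half_pos hν) ?_⟩
    have := (sq_sub_le_iff_mem_Icc (by positivity)).2 ⟨h₁.trans hγ'.1, hγ'.2.trans h₂⟩
    linear_combination this
end

section
/- Let β > 0, ω(x) = Σ_{i=1}^n cosh(β xᵢ), let C = diag(c₁,…,cₙ) with all cᵢ > 0, and let L f = Δf + xᵀC∇f + (tr C) f be the Fokker–Planck operator. Then for all f ∈ C_0^∞(ℝⁿ) and ζ ∈ ℂ with Re ζ ≥ (1 + β² + tr C)/2, one has Re ⟨(ζ − L)f, f⟩_{L²(ω)} ≥ ‖∇f‖²_{L²(ω)} + (1/2)‖f‖²_{L²(ω)}; in particular L − ζ is dissipative in L²(ℝⁿ; ω). -/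
open MeasureTheory
namespace Stmt13Aux
variable {n : ℕ}




/-- directional (partial) derivative of a real function -/
noncomputable def dd (g : (Fin n → ℝ) → ℝ) (i : Fin n) (x : Fin n → ℝ) : ℝ :=
  fderiv ℝ g x (Pi.single i 1)

lemma contDiff_dd {g : (Fin n → ℝ) → ℝ} (hg : ContDiff ℝ (⊤ : ℕ∞) g) (i : Fin n) :
    ContDiff ℝ (⊤ : ℕ∞) (dd g i) :=
  (hg.fderiv_right (by simp)).clm_apply contDiff_const

lemma hasCompactSupport_dd {g : (Fin n → ℝ) → ℝ} (hg : HasCompactSupport g) (i : Fin n) :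
    HasCompactSupport (dd g i) :=
  (hg.fderiv ℝ).comp_left (g := fun L : (Fin n → ℝ) →L[ℝ] ℝ => L (Pi.single i 1)) rfl

lemma integrable_mul_left {g h : (Fin n → ℝ) → ℝ} (hg : Continuous g) (hh : Continuous h)
    (hhs : HasCompactSupport h) : Integrable (fun x => g x * h x) :=
  (hg.mul hh).integrable_of_hasCompactSupport hhs.mul_left

lemma integrable_mul_right {g h : (Fin n → ℝ) → ℝ} (hg : Continuous g) (hgs : HasCompactSupport g)
    (hh : Continuous h) : Integrable (fun x => g x * h x) :=
  (hg.mul hh).integrable_of_hasCompactSupport hgs.mul_right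

/-- integration by parts -/
lemma ibp (φ ψ : (Fin n → ℝ) → ℝ) (hφ : ContDiff ℝ (⊤ : ℕ∞) φ) (hψ : ContDiff ℝ (⊤ : ℕ∞) ψ)
    (hψs : HasCompactSupport ψ) (i : Fin n) :
    ∫ x, φ x * dd ψ i x = - ∫ x, dd φ i x * ψ x := by
  apply integral_mul_fderiv_eq_neg_fderiv_mul_of_integrable
  · exact integrable_mul_left (contDiff_dd hφ i).continuous hψ.continuous hψs
  · exact integrable_mul_left hφ.continuous (contDiff_dd hψ i).continuous
      (hasCompactSupport_dd hψs i)
  · exact integrable_mul_left hφ.continuous hψ.continuous hψs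
  · exact fun x _ => hφ.differentiable (by simp) x
  · exact fun x _ => hψ.differentiable (by simp) x

lemma dd_mul {φ ψ : (Fin n → ℝ) → ℝ} {x : Fin n → ℝ} (hφ : DifferentiableAt ℝ φ x)
    (hψ : DifferentiableAt ℝ ψ x) (i : Fin n) :
    dd (fun y => φ y * ψ y) i x = dd φ i x * ψ x + φ x * dd ψ i x := by
  unfold dd
  rw [fderiv_fun_mul hφ hψ]
  simp
  ring




/-- derivative of a function of one coordinate -/
lemma dd_comp_coord {h : ℝ → ℝ} {h' : ℝ → ℝ} (hh : ∀ t, HasDerivAt h (h' t) t)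
    (j i : Fin n) (x : Fin n → ℝ) :
    dd (fun y => h (y j)) i x = (if j = i then h' (x j) else 0) := by
  have hproj := (ContinuousLinearMap.proj (R := ℝ) (φ := fun _ : Fin n => ℝ) j).hasFDerivAt (x := x)
  have H : HasFDerivAt (fun y : Fin n → ℝ => h (y j)) _ x :=
    (hh (x j)).comp_hasFDerivAt x hproj
  unfold dd
  rw [H.fderiv]
  simp [Pi.single_apply]

lemma contDiff_comp_coord {h : ℝ → ℝ} (hh : ContDiff ℝ (⊤ : ℕ∞) h) (j : Fin n) :
    ContDiff ℝ (⊤ : ℕ∞) (fun y : Fin n → ℝ => h (y j)) :=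
  hh.comp (contDiff_apply ℝ ℝ j)

noncomputable def ω (β : ℝ) (x : Fin n → ℝ) : ℝ := ∑ i, Real.cosh (β * x i)

lemma contDiff_ω (β : ℝ) : ContDiff ℝ (⊤ : ℕ∞) (ω (n := n) β) := by
  apply ContDiff.sum (fun i _ => ?_)
  exact contDiff_comp_coord (Real.contDiff_cosh.comp (contDiff_const.mul contDiff_id)) i

lemma dd_sum {g : Fin n → (Fin n → ℝ) → ℝ} {x : Fin n → ℝ}
    (hg : ∀ j, DifferentiableAt ℝ (g j) x) (i : Fin n) :
    dd (fun y => ∑ j, g j y) i x = ∑ j, dd (g j) i x := by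
  unfold dd
  rw [fderiv_fun_sum (fun j _ => hg j)]
  simp

lemma dd_ω (β : ℝ) (i : Fin n) (x : Fin n → ℝ) :
    dd (ω β) i x = β * Real.sinh (β * x i) := by
  have h : ∀ j : Fin n, ∀ t : ℝ, HasDerivAt (fun s => Real.cosh (β * s))
      (β * Real.sinh (β * t)) t := by
    intro j t
    exact ((Real.hasDerivAt_cosh (β * t)).comp t
      ((hasDerivAt_id t).const_mul β)).congr_deriv (by ring)
  have : dd (ω β) i x = ∑ j, dd (fun y : Fin n → ℝ => Real.cosh (β * y j)) i x := by
    apply dd_sum (fun j => ?_) i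
    exact ((contDiff_comp_coord (Real.contDiff_cosh.comp
      (contDiff_const.mul contDiff_id)) j).differentiable (by simp) x)
  rw [this]
  rw [Finset.sum_congr rfl (fun j _ => dd_comp_coord (h j) j i x)]
  simp

lemma dd_sinh (β : ℝ) (i : Fin n) (x : Fin n → ℝ) :
    dd (fun y : Fin n → ℝ => β * Real.sinh (β * y i)) i x = β ^ 2 * Real.cosh (β * x i) := by
  have h : ∀ t : ℝ, HasDerivAt (fun s => β * Real.sinh (β * s))
      (β ^ 2 * Real.cosh (β * t)) t := by
    intro t
    have := ((Real.hasDerivAt_sinh (β * t)).comp t ((hasDerivAt_id t).const_mul β)).const_mul β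
    exact this.congr_deriv (by ring)
  simpa using dd_comp_coord h i i x

lemma dd_coord (a : ℝ) (i : Fin n) (x : Fin n → ℝ) :
    dd (fun y : Fin n → ℝ => a * y i) i x = a := by
  have h : ∀ t : ℝ, HasDerivAt (fun s : ℝ => a * s) a t := fun t => by
    simpa using (hasDerivAt_id t).const_mul a
  simpa using dd_comp_coord h i i x


lemma hasCompactSupport_sq {r : (Fin n → ℝ) → ℝ} (hrs : HasCompactSupport r) :
    HasCompactSupport (fun x => r x * r x) := hrs.mul_left

lemma ibp1 (β : ℝ) {r : (Fin n → ℝ) → ℝ} (hr : ContDiff ℝ (⊤ : ℕ∞) r) (hrs : HasCompactSupport r)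
    (i : Fin n) :
    (∫ x, (r x * ω β x) * dd (dd r i) i x)
      = - (∫ x, (dd r i x)^2 * ω β x)
        + (1/2) * (∫ x, (β^2 * Real.cosh (β * x i)) * (r x * r x)) := by
  have hω := contDiff_ω (n := n) β
  have hdr := contDiff_dd hr i
  have hdrs := hasCompactSupport_dd hrs i
  have hs : ContDiff ℝ (⊤ : ℕ∞) (fun y : Fin n → ℝ => β * Real.sinh (β * y i)) :=
    contDiff_comp_coord (contDiff_const.mul
      (Real.contDiff_sinh.comp (contDiff_const.mul contDiff_id))) i
  have e1 : (∫ x, (r x * ω β x) * dd (dd r i) i x)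
      = - (∫ x, dd (fun y => r y * ω β y) i x * dd r i x) :=
    ibp _ _ (hr.mul hω) hdr hdrs i
  have e2 : ∀ x : Fin n → ℝ, dd (fun y => r y * ω β y) i x * dd r i x
      = (dd r i x)^2 * ω β x + (β * Real.sinh (β * x i)) * (r x * dd r i x) := by
    intro x
    rw [dd_mul (hr.differentiable (by simp) x) (hω.differentiable (by simp) x), dd_ω]
    ring
  have i1 : Integrable (fun x => (dd r i x)^2 * ω β x) :=
    integrable_mul_right (hdr.continuous.pow 2)
      (hdrs.comp_left (g := fun t : ℝ => t^2) (by simp)) hω.continuous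
  have i2 : Integrable (fun x => (β * Real.sinh (β * x i)) * (r x * dd r i x)) :=
    integrable_mul_left hs.continuous (hr.continuous.mul hdr.continuous) hdrs.mul_left
  have e3 : (∫ x, dd (fun y => r y * ω β y) i x * dd r i x)
      = (∫ x, (dd r i x)^2 * ω β x) + (∫ x, (β * Real.sinh (β * x i)) * (r x * dd r i x)) := by
    rw [integral_congr_ae (Filter.Eventually.of_forall e2)]
    exact integral_add i1 i2
  have e4' : ∀ x : Fin n → ℝ, dd (fun y : Fin n → ℝ => β * Real.sinh (β * y i)) i x * (r x * r x)
      = (β^2 * Real.cosh (β * x i)) * (r x * r x) := by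
    intro x
    rw [dd_sinh]
  have e4 : (∫ x, (β * Real.sinh (β * x i)) * dd (fun y => r y * r y) i x)
      = - (∫ x, (β^2 * Real.cosh (β * x i)) * (r x * r x)) := by
    rw [ibp _ _ hs (hr.mul hr) (hasCompactSupport_sq hrs) i,
      integral_congr_ae (Filter.Eventually.of_forall e4')]
  have e5 : ∀ x : Fin n → ℝ, (β * Real.sinh (β * x i)) * dd (fun y => r y * r y) i x
      = 2 * ((β * Real.sinh (β * x i)) * (r x * dd r i x)) := by
    intro x
    rw [dd_mul (hr.differentiable (by simp) x) (hr.differentiable (by simp) x)]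
    ring
  have e6 : (2 : ℝ) * (∫ x, (β * Real.sinh (β * x i)) * (r x * dd r i x))
      = - (∫ x, (β^2 * Real.cosh (β * x i)) * (r x * r x)) := by
    rw [← integral_const_mul, integral_congr_ae (Filter.Eventually.of_forall fun x => (e5 x).symm),
      e4]
  rw [e1, e3]
  linarith [e6]

lemma ibp2 (β : ℝ) (a : ℝ) {r : (Fin n → ℝ) → ℝ} (hr : ContDiff ℝ (⊤ : ℕ∞) r)
    (hrs : HasCompactSupport r) (i : Fin n) :
    (∫ x, (a * x i * ω β x) * (r x * dd r i x))
      = - (1/2) * (∫ x, (a * ω β x + a * x i * (β * Real.sinh (β * x i))) * (r x * r x)) := by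
  have hω := contDiff_ω (n := n) β
  have hc : ContDiff ℝ (⊤ : ℕ∞) (fun y : Fin n → ℝ => a * y i) :=
    contDiff_comp_coord (contDiff_const.mul contDiff_id) i
  have hφ : ContDiff ℝ (⊤ : ℕ∞) (fun y : Fin n → ℝ => a * y i * ω β y) := hc.mul hω
  have e1 : (∫ x, (a * x i * ω β x) * dd (fun y => r y * r y) i x)
      = - (∫ x, dd (fun y => a * y i * ω β y) i x * (r x * r x)) :=
    ibp _ _ hφ (hr.mul hr) (hasCompactSupport_sq hrs) i
  have e2 : ∀ x : Fin n → ℝ, dd (fun y : Fin n → ℝ => a * y i * ω β y) i x * (r x * r x)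
      = (a * ω β x + a * x i * (β * Real.sinh (β * x i))) * (r x * r x) := by
    intro x
    rw [dd_mul (hc.differentiable (by simp) x) (hω.differentiable (by simp) x), dd_ω, dd_coord]
  have e3 : ∀ x : Fin n → ℝ, (a * x i * ω β x) * dd (fun y => r y * r y) i x
      = 2 * ((a * x i * ω β x) * (r x * dd r i x)) := by
    intro x
    rw [dd_mul (hr.differentiable (by simp) x) (hr.differentiable (by simp) x)]
    ring
  have e4 : (2 : ℝ) * (∫ x, (a * x i * ω β x) * (r x * dd r i x))
      = - (∫ x, (a * ω β x + a * x i * (β * Real.sinh (β * x i))) * (r x * r x)) := by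
    rw [← integral_const_mul, integral_congr_ae (Filter.Eventually.of_forall fun x => (e3 x).symm),
      e1, integral_congr_ae (Filter.Eventually.of_forall e2)]
  linarith [e4]


lemma real_main (β : ℝ) (c : Fin n → ℝ) {r : (Fin n → ℝ) → ℝ} (hr : ContDiff ℝ (⊤ : ℕ∞) r)
    (hrs : HasCompactSupport r) :
    (∫ x, ((∑ i, dd (dd r i) i x) + (∑ i, (c i * x i) * dd r i x) + (∑ i, c i) * r x)
        * (r x * ω β x))
    = - (∫ x, (∑ i, (dd r i x)^2) * ω β x)
      + (1/2) * (β^2 + ∑ i, c i) * (∫ x, (r x * r x) * ω β x)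
      - (1/2) * (∫ x, (∑ i, (c i * x i) * (β * Real.sinh (β * x i))) * (r x * r x)) := by
  have hω := contDiff_ω (n := n) β
  have hrr : Continuous (fun x : Fin n → ℝ => r x * r x) := hr.continuous.mul hr.continuous
  have iA : ∀ i : Fin n, Integrable (fun x => (r x * ω β x) * dd (dd r i) i x) :=
    fun i => integrable_mul_left (hr.continuous.mul hω.continuous)
      (contDiff_dd (contDiff_dd hr i) i).continuous
      (hasCompactSupport_dd (hasCompactSupport_dd hrs i) i)
  have iB : ∀ i : Fin n, Integrable (fun x => (c i * x i * ω β x) * (r x * dd r i x)) :=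
    fun i => integrable_mul_left ((continuous_const.mul (continuous_apply i)).mul hω.continuous)
      (hr.continuous.mul (contDiff_dd hr i).continuous) (hasCompactSupport_dd hrs i).mul_left
  have iC : Integrable (fun x => (∑ i, c i) * ((r x * r x) * ω β x)) :=
    (integrable_mul_right hrr (hasCompactSupport_sq hrs) hω.continuous).const_mul _
  have i1 : ∀ i : Fin n, Integrable (fun x => (dd r i x)^2 * ω β x) := fun i =>
    integrable_mul_right ((contDiff_dd hr i).continuous.pow 2)
      ((hasCompactSupport_dd hrs i).comp_left (g := fun t : ℝ => t^2) (by simp)) hω.continuous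
  have i2 : ∀ i : Fin n, Integrable (fun x => (β^2 * Real.cosh (β * x i)) * (r x * r x)) :=
    fun i => integrable_mul_left
      (contDiff_comp_coord (contDiff_const.mul (Real.contDiff_cosh.comp
        (contDiff_const.mul contDiff_id)) : ContDiff ℝ (⊤ : ℕ∞) fun t : ℝ => β^2 * Real.cosh (β * t))
        i).continuous hrr (hasCompactSupport_sq hrs)
  have i3 : ∀ i : Fin n, Integrable (fun x => (c i * ω β x) * (r x * r x)) := fun i =>
    integrable_mul_left (continuous_const.mul hω.continuous) hrr (hasCompactSupport_sq hrs)
  have i4 : ∀ i : Fin n,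
      Integrable (fun x => (c i * x i * (β * Real.sinh (β * x i))) * (r x * r x)) := fun i =>
    integrable_mul_left ((continuous_const.mul (continuous_apply i)).mul
      (continuous_const.mul (Real.continuous_sinh.comp (continuous_const.mul
        (continuous_apply i))))) hrr (hasCompactSupport_sq hrs)
  -- Step 1: split the integral into the three natural pieces
  have step1 : (∫ x, ((∑ i, dd (dd r i) i x) + (∑ i, (c i * x i) * dd r i x)
        + (∑ i, c i) * r x) * (r x * ω β x))
      = (∫ x, ∑ i, (r x * ω β x) * dd (dd r i) i x)
        + ((∫ x, ∑ i, (c i * x i * ω β x) * (r x * dd r i x))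
          + (∫ x, (∑ i, c i) * ((r x * r x) * ω β x))) := by
    have hpt : ∀ x : Fin n → ℝ, ((∑ i, dd (dd r i) i x) + (∑ i, (c i * x i) * dd r i x)
          + (∑ i, c i) * r x) * (r x * ω β x)
        = (∑ i, (r x * ω β x) * dd (dd r i) i x)
            + ((∑ i, (c i * x i * ω β x) * (r x * dd r i x))
              + (∑ i, c i) * ((r x * r x) * ω β x)) := by
      intro x
      have h1 : (∑ i, dd (dd r i) i x * (r x * ω β x))
          = ∑ i, (r x * ω β x) * dd (dd r i) i x :=
        Finset.sum_congr rfl fun i _ => mul_comm _ _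
      have h2 : (∑ i, (c i * x i) * dd r i x * (r x * ω β x))
          = ∑ i, (c i * x i * ω β x) * (r x * dd r i x) :=
        Finset.sum_congr rfl fun i _ => by ring
      rw [add_mul, add_mul, Finset.sum_mul, Finset.sum_mul, h1, h2]
      ring
    have iBC : Integrable (fun x => (∑ i, (c i * x i * ω β x) * (r x * dd r i x))
        + (∑ i, c i) * ((r x * r x) * ω β x)) :=
      (integrable_finset_sum _ fun i _ => iB i).add iC
    rw [integral_congr_ae (Filter.Eventually.of_forall hpt),
      integral_add (integrable_finset_sum _ fun i _ => iA i) iBC,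
      integral_add (integrable_finset_sum _ fun i _ => iB i) iC]
  -- Step 2: second-order term
  have s1 : (∫ x, ∑ i, (r x * ω β x) * dd (dd r i) i x)
      = - (∫ x, (∑ i, (dd r i x)^2) * ω β x)
        + (1/2) * (β^2 * (∫ x, (r x * r x) * ω β x)) := by
    rw [integral_finset_sum _ (fun i _ => iA i),
      Finset.sum_congr rfl (fun i _ => ibp1 β hr hrs i), Finset.sum_add_distrib,
      Finset.sum_neg_distrib, ← Finset.mul_sum,
      ← integral_finset_sum _ (fun i _ => i1 i), ← integral_finset_sum _ (fun i _ => i2 i)]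
    have h1 : ∀ x : Fin n → ℝ, (∑ i, (dd r i x)^2 * ω β x) = (∑ i, (dd r i x)^2) * ω β x :=
      fun x => (Finset.sum_mul _ _ _).symm
    have h2 : ∀ x : Fin n → ℝ, (∑ i, (β^2 * Real.cosh (β * x i)) * (r x * r x))
        = β^2 * ((r x * r x) * ω β x) := by
      intro x
      rw [← Finset.sum_mul, ← Finset.mul_sum]
      unfold ω
      ring
    rw [integral_congr_ae (Filter.Eventually.of_forall h1),
      integral_congr_ae (Filter.Eventually.of_forall h2), integral_const_mul]
  -- Step 3: drift term
  have s2 : (∫ x, ∑ i, (c i * x i * ω β x) * (r x * dd r i x))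
      = - (1/2) * ((∑ i, c i) * (∫ x, (r x * r x) * ω β x))
        - (1/2) * (∫ x, (∑ i, (c i * x i) * (β * Real.sinh (β * x i))) * (r x * r x)) := by
    rw [integral_finset_sum _ (fun i _ => iB i),
      Finset.sum_congr rfl (fun i _ => ibp2 β (c i) hr hrs i)]
    have h1 : ∀ i : Fin n, (∫ x, (c i * ω β x + c i * x i * (β * Real.sinh (β * x i)))
          * (r x * r x))
        = c i * (∫ x, (r x * r x) * ω β x)
          + (∫ x, (c i * x i * (β * Real.sinh (β * x i))) * (r x * r x)) := by
      intro i
      have hpt : ∀ x : Fin n → ℝ, (c i * ω β x + c i * x i * (β * Real.sinh (β * x i)))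
            * (r x * r x)
          = c i * ((r x * r x) * ω β x)
            + (c i * x i * (β * Real.sinh (β * x i))) * (r x * r x) := fun x => by ring
      rw [integral_congr_ae (Filter.Eventually.of_forall hpt),
        integral_add ((integrable_mul_right hrr (hasCompactSupport_sq hrs)
          hω.continuous).const_mul _) (i4 i), integral_const_mul]
    simp only [h1]
    have hT : (∫ x, (∑ i, (c i * x i) * (β * Real.sinh (β * x i))) * (r x * r x))
        = ∑ i, ∫ x, (c i * x i * (β * Real.sinh (β * x i))) * (r x * r x) := by
      rw [integral_congr_ae (Filter.Eventually.of_forall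
        (fun x : Fin n → ℝ => Finset.sum_mul Finset.univ
          (fun i => (c i * x i) * (β * Real.sinh (β * x i))) (r x * r x)))]
      exact integral_finset_sum _ (fun i _ => i4 i)
    rw [hT]
    rw [show (∑ i, (-(1/2) * (c i * (∫ x, (r x * r x) * ω β x)
          + ∫ x, (c i * x i * (β * Real.sinh (β * x i))) * (r x * r x))))
        = -(1/2) * ((∑ i, c i * (∫ x, (r x * r x) * ω β x))
            + ∑ i, ∫ x, (c i * x i * (β * Real.sinh (β * x i))) * (r x * r x)) from by
      rw [← Finset.mul_sum, Finset.sum_add_distrib]]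
    rw [← Finset.sum_mul]
    ring
  -- Step 4: zeroth-order term
  have s3 : (∫ x, (∑ i, c i) * ((r x * r x) * ω β x))
      = (∑ i, c i) * (∫ x, (r x * r x) * ω β x) := integral_const_mul _ _
  rw [step1, s1, s2, s3]
  ring


lemma pd_re (g : (Fin n → ℝ) → ℂ) (hg : Differentiable ℝ g) (i : Fin n) (x : Fin n → ℝ) :
    (fderiv ℝ g x (Pi.single i 1)).re = dd (fun y => (g y).re) i x := by
  have h : HasFDerivAt (fun y => (g y).re) (Complex.reCLM.comp (fderiv ℝ g x)) x :=
    Complex.reCLM.hasFDerivAt.comp x (hg x).hasFDerivAt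
  unfold dd
  rw [h.fderiv]
  rfl

lemma pd_im (g : (Fin n → ℝ) → ℂ) (hg : Differentiable ℝ g) (i : Fin n) (x : Fin n → ℝ) :
    (fderiv ℝ g x (Pi.single i 1)).im = dd (fun y => (g y).im) i x := by
  have h : HasFDerivAt (fun y => (g y).im) (Complex.imCLM.comp (fderiv ℝ g x)) x :=
    Complex.imCLM.hasFDerivAt.comp x (hg x).hasFDerivAt
  unfold dd
  rw [h.fderiv]
  rfl

end Stmt13Aux

open Stmt13Aux in
/-- dissipativity estimate for the Fokker–Planck operator
`L f = Δf + xᵀC∇f + (tr C) f` in `L²(ω)` with `ω(x) = ∑ᵢ cosh(β xᵢ)`. -/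
theorem stmt13 {n : ℕ} (β : ℝ) (hβ : 0 < β) (c : Fin n → ℝ) (hc : ∀ i, 0 < c i)
    (f : (Fin n → ℝ) → ℂ) (hf : ContDiff ℝ (⊤ : ℕ∞) f) (hsupp : HasCompactSupport f)
    (ζ : ℂ) (hζ : (1 + β ^ 2 + ∑ i, c i) / 2 ≤ ζ.re) :
    let ω : (Fin n → ℝ) → ℝ := fun x => ∑ i, Real.cosh (β * x i)
    let pd : ((Fin n → ℝ) → ℂ) → Fin n → ((Fin n → ℝ) → ℂ) :=
      fun g i x => fderiv ℝ g x (Pi.single i 1)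
    let Lf : (Fin n → ℝ) → ℂ := fun x =>
      (∑ i, pd (pd f i) i x) + (∑ i, ((c i * x i : ℝ) : ℂ) * pd f i x)
        + ((∑ i, c i : ℝ) : ℂ) * f x
    (∫ x : Fin n → ℝ, (∑ i, ‖pd f i x‖ ^ 2) * ω x)
        + (1 / 2) * (∫ x : Fin n → ℝ, ‖f x‖ ^ 2 * ω x)
      ≤ (∫ x : Fin n → ℝ,
          (ζ * f x - Lf x) * (starRingEnd ℂ) (f x) * ((ω x : ℝ) : ℂ)).re := by
  intro ω pd Lf
  have hfd : Differentiable ℝ f := hf.differentiable (by simp)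
  set P : (Fin n → ℝ) → ℝ := fun y => (f y).re with hPdef
  set Q : (Fin n → ℝ) → ℝ := fun y => (f y).im with hQdef
  have hPx : ∀ y, (f y).re = P y := fun _ => rfl
  have hQx : ∀ y, (f y).im = Q y := fun _ => rfl
  have hP1 : ContDiff ℝ (⊤ : ℕ∞) P := Complex.reCLM.contDiff.comp hf
  have hQ1 : ContDiff ℝ (⊤ : ℕ∞) Q := Complex.imCLM.contDiff.comp hf
  have hPs : HasCompactSupport P := hsupp.comp_left (g := Complex.re) rfl
  have hQs : HasCompactSupport Q := hsupp.comp_left (g := Complex.im) rfl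
  have hωc : Continuous ω := (contDiff_ω (n := n) β).continuous
  have hω0 : ∀ x, 0 ≤ ω x := fun x => Finset.sum_nonneg fun i _ => le_of_lt (Real.cosh_pos _)
  have hpd : ∀ i, ContDiff ℝ (⊤ : ℕ∞) (pd f i) := fun i =>
    (hf.fderiv_right (by simp)).clm_apply contDiff_const
  have hpd2 : ∀ i, ContDiff ℝ (⊤ : ℕ∞) (pd (pd f i) i) := fun i =>
    ((hpd i).fderiv_right (by simp)).clm_apply contDiff_const
  have hre : ∀ (i : Fin n) x, (pd f i x).re = dd P i x := fun i x => pd_re f hfd i x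
  have him : ∀ (i : Fin n) x, (pd f i x).im = dd Q i x := fun i x => pd_im f hfd i x
  have hre2 : ∀ (i : Fin n) x, (pd (pd f i) i x).re = dd (dd P i) i x := fun i x => by
    have h := pd_re (pd f i) ((hpd i).differentiable (by simp)) i x
    rwa [show (fun y => (pd f i y).re) = dd P i from funext fun y => hre i y] at h
  have him2 : ∀ (i : Fin n) x, (pd (pd f i) i x).im = dd (dd Q i) i x := fun i x => by
    have h := pd_im (pd f i) ((hpd i).differentiable (by simp)) i x
    rwa [show (fun y => (pd f i y).im) = dd Q i from funext fun y => him i y] at h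
  have hmulre : ∀ (r : ℝ) (z : ℂ), ((r : ℂ) * z).re = r * z.re := fun r z => by simp
  have hmulim : ∀ (r : ℝ) (z : ℂ), ((r : ℂ) * z).im = r * z.im := fun r z => by simp
  -- real and imaginary parts of Lf
  have hLre : ∀ x, (Lf x).re
      = (∑ i, dd (dd P i) i x) + (∑ i, (c i * x i) * dd P i x) + (∑ i, c i) * P x := by
    intro x
    show ((∑ i, pd (pd f i) i x) + (∑ i, ((c i * x i : ℝ) : ℂ) * pd f i x)
      + ((∑ i, c i : ℝ) : ℂ) * f x).re = _
    have h2 : (∑ i, (((c i * x i : ℝ) : ℂ) * pd f i x).re) = ∑ i, (c i * x i) * dd P i x :=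
      Finset.sum_congr rfl fun i _ => by rw [hmulre, hre i x]
    rw [Complex.add_re, Complex.add_re, Complex.re_sum, Complex.re_sum,
      Finset.sum_congr rfl fun i _ => hre2 i x, h2, hmulre, hPx]
  have hLim : ∀ x, (Lf x).im
      = (∑ i, dd (dd Q i) i x) + (∑ i, (c i * x i) * dd Q i x) + (∑ i, c i) * Q x := by
    intro x
    show ((∑ i, pd (pd f i) i x) + (∑ i, ((c i * x i : ℝ) : ℂ) * pd f i x)
      + ((∑ i, c i : ℝ) : ℂ) * f x).im = _
    have h2 : (∑ i, (((c i * x i : ℝ) : ℂ) * pd f i x).im) = ∑ i, (c i * x i) * dd Q i x :=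
      Finset.sum_congr rfl fun i _ => by rw [hmulim, him i x]
    rw [Complex.add_im, Complex.add_im, Complex.im_sum, Complex.im_sum,
      Finset.sum_congr rfl fun i _ => him2 i x, h2, hmulim, hQx]
  -- pointwise real part of the integrand
  have hFre : ∀ x, ((ζ * f x - Lf x) * (starRingEnd ℂ) (f x) * ((ω x : ℝ) : ℂ)).re
      = ζ.re * ((P x * P x + Q x * Q x) * ω x)
        - (((∑ i, dd (dd P i) i x) + (∑ i, (c i * x i) * dd P i x) + (∑ i, c i) * P x)
            * (P x * ω x)
          + ((∑ i, dd (dd Q i) i x) + (∑ i, (c i * x i) * dd Q i x) + (∑ i, c i) * Q x)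
            * (Q x * ω x)) := by
    intro x
    simp only [Complex.mul_re, Complex.mul_im, Complex.sub_re, Complex.sub_im,
      Complex.conj_re, Complex.conj_im, Complex.ofReal_re, Complex.ofReal_im,
      hLre x, hLim x, hPx, hQx]
    ring
  -- continuity of Lf
  have hLfc : Continuous Lf := by
    show Continuous fun x => (∑ i, pd (pd f i) i x) + (∑ i, ((c i * x i : ℝ) : ℂ) * pd f i x)
      + ((∑ i, c i : ℝ) : ℂ) * f x
    exact ((continuous_finset_sum _ fun i _ => (hpd2 i).continuous).add
      (continuous_finset_sum _ fun i _ =>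
        ((Complex.continuous_ofReal.comp (continuous_const.mul (continuous_apply i))).mul
          (hpd i).continuous))).add (continuous_const.mul hf.continuous)
  -- integrability of the full complex integrand
  have hFint : Integrable (fun x => (ζ * f x - Lf x) * (starRingEnd ℂ) (f x)
      * ((ω x : ℝ) : ℂ)) := by
    have hcs1 : HasCompactSupport (fun x => (ζ * f x - Lf x) * (starRingEnd ℂ) (f x)) :=
      HasCompactSupport.mul_left (hsupp.comp_left (g := starRingEnd ℂ) (map_zero _))
    have hcs : HasCompactSupport (fun x => (ζ * f x - Lf x) * (starRingEnd ℂ) (f x)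
        * ((ω x : ℝ) : ℂ)) := hcs1.mul_right
    exact Continuous.integrable_of_hasCompactSupport
      ((((continuous_const.mul hf.continuous).sub hLfc).mul
        (Complex.continuous_conj.comp hf.continuous)).mul
        (Complex.continuous_ofReal.comp hωc)) hcs
  -- move `.re` inside the integral
  have hre_int : (∫ x : Fin n → ℝ,
        (ζ * f x - Lf x) * (starRingEnd ℂ) (f x) * ((ω x : ℝ) : ℂ)).re
      = ∫ x, ((ζ * f x - Lf x) * (starRingEnd ℂ) (f x) * ((ω x : ℝ) : ℂ)).re := by
    have h := integral_re hFint
    simpa [RCLike.re_to_complex] using h.symm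
  -- integrability bank
  have hGLPc : Continuous (fun x => (∑ i, dd (dd P i) i x) + (∑ i, (c i * x i) * dd P i x)
      + (∑ i, c i) * P x) :=
    ((continuous_finset_sum _ fun i _ => (contDiff_dd (contDiff_dd hP1 i) i).continuous).add
      (continuous_finset_sum _ fun i _ =>
        ((continuous_const.mul (continuous_apply i)).mul (contDiff_dd hP1 i).continuous))).add
      (continuous_const.mul hP1.continuous)
  have hGLQc : Continuous (fun x => (∑ i, dd (dd Q i) i x) + (∑ i, (c i * x i) * dd Q i x)
      + (∑ i, c i) * Q x) :=
    ((continuous_finset_sum _ fun i _ => (contDiff_dd (contDiff_dd hQ1 i) i).continuous).add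
      (continuous_finset_sum _ fun i _ =>
        ((continuous_const.mul (continuous_apply i)).mul (contDiff_dd hQ1 i).continuous))).add
      (continuous_const.mul hQ1.continuous)
  have iGLP : Integrable (fun x => ((∑ i, dd (dd P i) i x) + (∑ i, (c i * x i) * dd P i x)
      + (∑ i, c i) * P x) * (P x * ω x)) :=
    integrable_mul_left hGLPc (hP1.continuous.mul hωc) hPs.mul_right
  have iGLQ : Integrable (fun x => ((∑ i, dd (dd Q i) i x) + (∑ i, (c i * x i) * dd Q i x)
      + (∑ i, c i) * Q x) * (Q x * ω x)) :=
    integrable_mul_left hGLQc (hQ1.continuous.mul hωc) hQs.mul_right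
  have iu : Integrable (fun x => (P x * P x + Q x * Q x) * ω x) :=
    integrable_mul_right ((hP1.continuous.mul hP1.continuous).add
      (hQ1.continuous.mul hQ1.continuous))
      ((hPs.mul_left (f := P)).add (hQs.mul_left (f := Q))) hωc
  have iAP : Integrable (fun x => (∑ i, (dd P i x)^2) * ω x) := by
    have h : (fun x => (∑ i, (dd P i x)^2) * ω x) = fun x => ∑ i, (dd P i x)^2 * ω x :=
      funext fun x => Finset.sum_mul _ _ _
    rw [h]
    exact integrable_finset_sum _ fun i _ => integrable_mul_right
      ((contDiff_dd hP1 i).continuous.pow 2)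
      ((hasCompactSupport_dd hPs i).comp_left (g := fun t : ℝ => t^2) (by simp)) hωc
  have iAQ : Integrable (fun x => (∑ i, (dd Q i x)^2) * ω x) := by
    have h : (fun x => (∑ i, (dd Q i x)^2) * ω x) = fun x => ∑ i, (dd Q i x)^2 * ω x :=
      funext fun x => Finset.sum_mul _ _ _
    rw [h]
    exact integrable_finset_sum _ fun i _ => integrable_mul_right
      ((contDiff_dd hQ1 i).continuous.pow 2)
      ((hasCompactSupport_dd hQs i).comp_left (g := fun t : ℝ => t^2) (by simp)) hωc
  have iBP : Integrable (fun x => (P x * P x) * ω x) :=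
    integrable_mul_right (hP1.continuous.mul hP1.continuous) (hPs.mul_left (f := P)) hωc
  have iBQ : Integrable (fun x => (Q x * Q x) * ω x) :=
    integrable_mul_right (hQ1.continuous.mul hQ1.continuous) (hQs.mul_left (f := Q)) hωc
  -- split the real part of the RHS
  have hsplit : (∫ x, ((ζ * f x - Lf x) * (starRingEnd ℂ) (f x) * ((ω x : ℝ) : ℂ)).re)
      = ζ.re * (∫ x, (P x * P x + Q x * Q x) * ω x)
        - ((∫ x, ((∑ i, dd (dd P i) i x) + (∑ i, (c i * x i) * dd P i x)
            + (∑ i, c i) * P x) * (P x * ω x))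
          + (∫ x, ((∑ i, dd (dd Q i) i x) + (∑ i, (c i * x i) * dd Q i x)
            + (∑ i, c i) * Q x) * (Q x * ω x))) := by
    rw [integral_congr_ae (Filter.Eventually.of_forall hFre)]
    have i5 : Integrable (fun x => ζ.re * ((P x * P x + Q x * Q x) * ω x)) := iu.const_mul _
    have i6 : Integrable (fun x => ((∑ i, dd (dd P i) i x) + (∑ i, (c i * x i) * dd P i x)
        + (∑ i, c i) * P x) * (P x * ω x)
        + ((∑ i, dd (dd Q i) i x) + (∑ i, (c i * x i) * dd Q i x)
        + (∑ i, c i) * Q x) * (Q x * ω x)) := iGLP.add iGLQ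
    rw [integral_sub i5 i6, integral_const_mul, integral_add iGLP iGLQ]
  -- the two real integration-by-parts computations
  have rmP : (∫ x, ((∑ i, dd (dd P i) i x) + (∑ i, (c i * x i) * dd P i x)
        + (∑ i, c i) * P x) * (P x * ω x))
      = - (∫ x, (∑ i, (dd P i x)^2) * ω x)
        + (1/2) * (β^2 + ∑ i, c i) * (∫ x, (P x * P x) * ω x)
        - (1/2) * (∫ x, (∑ i, (c i * x i) * (β * Real.sinh (β * x i))) * (P x * P x)) :=
    real_main β c hP1 hPs
  have rmQ : (∫ x, ((∑ i, dd (dd Q i) i x) + (∑ i, (c i * x i) * dd Q i x)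
        + (∑ i, c i) * Q x) * (Q x * ω x))
      = - (∫ x, (∑ i, (dd Q i x)^2) * ω x)
        + (1/2) * (β^2 + ∑ i, c i) * (∫ x, (Q x * Q x) * ω x)
        - (1/2) * (∫ x, (∑ i, (c i * x i) * (β * Real.sinh (β * x i))) * (Q x * Q x)) :=
    real_main β c hQ1 hQs
  -- rewrite the LHS
  have hL1 : (∫ x : Fin n → ℝ, (∑ i, ‖pd f i x‖ ^ 2) * ω x)
      = (∫ x, (∑ i, (dd P i x)^2) * ω x) + (∫ x, (∑ i, (dd Q i x)^2) * ω x) := by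
    have hpt : ∀ x, (∑ i, ‖pd f i x‖ ^ 2) * ω x
        = (∑ i, (dd P i x)^2) * ω x + (∑ i, (dd Q i x)^2) * ω x := by
      intro x
      rw [← add_mul]
      congr 1
      rw [← Finset.sum_add_distrib]
      refine Finset.sum_congr rfl fun i _ => ?_
      rw [← hre i x, ← him i x, Complex.sq_norm, Complex.normSq_apply]
      ring
    rw [integral_congr_ae (Filter.Eventually.of_forall hpt)]
    exact integral_add iAP iAQ
  have hL2 : (∫ x : Fin n → ℝ, ‖f x‖ ^ 2 * ω x)
      = (∫ x, (P x * P x) * ω x) + (∫ x, (Q x * Q x) * ω x) := by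
    have hpt : ∀ x, ‖f x‖ ^ 2 * ω x = (P x * P x) * ω x + (Q x * Q x) * ω x := by
      intro x
      rw [Complex.sq_norm, Complex.normSq_apply, hPx, hQx]
      ring
    rw [integral_congr_ae (Filter.Eventually.of_forall hpt)]
    exact integral_add iBP iBQ
  -- nonnegativity facts
  have hsign : ∀ (t : ℝ), 0 ≤ t * Real.sinh (β * t) := by
    intro t
    rcases le_or_gt 0 t with h | h
    · refine mul_nonneg h ?_
      rw [← Real.sinh_zero]
      exact Real.sinh_le_sinh.2 (mul_nonneg hβ.le h)
    · have h1 : Real.sinh (β * t) ≤ 0 := by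
        rw [← Real.sinh_zero]
        exact Real.sinh_le_sinh.2 (by nlinarith)
      have := mul_nonneg (neg_nonneg.2 h.le) (neg_nonneg.2 h1)
      simpa using this
  have hterm : ∀ (i : Fin n) (x : Fin n → ℝ),
      0 ≤ (c i * x i) * (β * Real.sinh (β * x i)) := by
    intro i x
    have h := hsign (x i)
    calc (0:ℝ) ≤ (c i * β) * (x i * Real.sinh (β * x i)) :=
          mul_nonneg (mul_nonneg (hc i).le hβ.le) h
      _ = (c i * x i) * (β * Real.sinh (β * x i)) := by ring
  have hTP0 : 0 ≤ ∫ x, (∑ i, (c i * x i) * (β * Real.sinh (β * x i))) * (P x * P x) :=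
    integral_nonneg fun x => mul_nonneg (Finset.sum_nonneg fun i _ => hterm i x)
      (mul_self_nonneg _)
  have hTQ0 : 0 ≤ ∫ x, (∑ i, (c i * x i) * (β * Real.sinh (β * x i))) * (Q x * Q x) :=
    integral_nonneg fun x => mul_nonneg (Finset.sum_nonneg fun i _ => hterm i x)
      (mul_self_nonneg _)
  have hBP0 : 0 ≤ ∫ x, (P x * P x) * ω x :=
    integral_nonneg fun x => mul_nonneg (mul_self_nonneg _) (hω0 x)
  have hBQ0 : 0 ≤ ∫ x, (Q x * Q x) * ω x :=
    integral_nonneg fun x => mul_nonneg (mul_self_nonneg _) (hω0 x)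
  have hu : (∫ x, (P x * P x + Q x * Q x) * ω x)
      = (∫ x, (P x * P x) * ω x) + (∫ x, (Q x * Q x) * ω x) := by
    rw [integral_congr_ae (Filter.Eventually.of_forall
      fun x : Fin n → ℝ => add_mul (P x * P x) (Q x * Q x) (ω x))]
    exact integral_add iBP iBQ
  -- final assembly
  rw [hL1, hL2, hre_int, hsplit, rmP, rmQ, hu]
  have h0 : 0 ≤ (ζ.re - (1 + β ^ 2 + ∑ i, c i) / 2)
      * ((∫ x, (P x * P x) * ω x) + (∫ x, (Q x * Q x) * ω x)) :=
    mul_nonneg (by linarith) (by linarith)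
  nlinarith [h0, hTP0, hTQ0]
end

section
/- Let D, P ∈ ℝ^{d×d} be symmetric positive semi-definite and positive definite respectively, let u ∈ ℝ^d, and let J ∈ ℝ^{d×d} (playing the role of ∂u/∂x). Then the 2×2 matrix Y_P := [[tr(D J P Jᵀ), uᵀ D J P u], [uᵀ D J P u, (uᵀ P u)(uᵀ D u)]] is positive semi-definite, where symmetry of the relevant products is assumed so that the off-diagonal entries coincide; equivalently, (uᵀ D J P u)² ≤ tr(D J P Jᵀ)·(uᵀ P u)(uᵀ D u). -/
open Matrix

private lemma quad_psd_aux (a b c v0 v1 : ℝ) (ha : 0 ≤ a) (hc : 0 ≤ c) (h : b ^ 2 ≤ a * c) :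
    0 ≤ v0 * (a * v0 + b * v1) + v1 * (b * v0 + c * v1) := by
  rcases eq_or_lt_of_le ha with h0 | h0
  · have hb2 : b ^ 2 ≤ 0 := by nlinarith
    have hb : b = 0 := by nlinarith [sq_nonneg b]
    rw [hb, ← h0]
    nlinarith [mul_nonneg hc (sq_nonneg v1)]
  · nlinarith [sq_nonneg (a * v0 + b * v1), mul_nonneg (sub_nonneg.2 h) (sq_nonneg v1), h0,
      mul_pos h0 h0]

private lemma quad_eq {d : ℕ} (A B : Matrix (Fin d) (Fin d) ℝ) (hA : A.IsSymm)
    (u : Fin d → ℝ) : u ⬝ᵥ (A * B).mulVec u = (A.mulVec u) ⬝ᵥ (B.mulVec u) := by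
  rw [← Matrix.mulVec_mulVec, Matrix.dotProduct_mulVec, ← Matrix.mulVec_transpose, hA.eq]

/-- the matrix `Y_P` is positive semi-definite; equivalently the
Cauchy–Schwarz type inequality `(uᵀDJPu)² ≤ tr(DJPJᵀ)·(uᵀPu)(uᵀDu)` holds. -/
theorem stmt19 {d : ℕ} (D P J : Matrix (Fin d) (Fin d) ℝ)
    (hD : D.PosSemidef) (hP : P.PosDef) (hJ : J.IsSymm) (u : Fin d → ℝ) :
    (!![(D * J * P * Jᵀ).trace, u ⬝ᵥ (D * J * P).mulVec u;
        u ⬝ᵥ (D * J * P).mulVec u, (u ⬝ᵥ P.mulVec u) * (u ⬝ᵥ D.mulVec u)] :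
      Matrix (Fin 2) (Fin 2) ℝ).PosSemidef ∧
    (u ⬝ᵥ (D * J * P).mulVec u) ^ 2 ≤
      (D * J * P * Jᵀ).trace * ((u ⬝ᵥ P.mulVec u) * (u ⬝ᵥ D.mulVec u)) := by
  open MatrixOrder in set A := CFC.sqrt D with hAdef
  open MatrixOrder in set B := CFC.sqrt P with hBdef
  have hAsymm : A.IsSymm := by
    have := open MatrixOrder in (CFC.sqrt_nonneg D).posSemidef.isHermitian
    rwa [Matrix.IsHermitian, Matrix.conjTranspose_eq_transpose_of_trivial] at this
  have hBsymm : B.IsSymm := by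
    have := open MatrixOrder in (CFC.sqrt_nonneg P).posSemidef.isHermitian
    rwa [Matrix.IsHermitian, Matrix.conjTranspose_eq_transpose_of_trivial] at this
  have hAA : A * A = D := open MatrixOrder in CFC.sqrt_mul_sqrt_self D hD.nonneg
  have hBB : B * B = P := open MatrixOrder in CFC.sqrt_mul_sqrt_self P hP.posSemidef.nonneg
  set M := A * J * B with hMdef
  set x := A.mulVec u with hxdef
  set y := B.mulVec u with hydef
  -- off-diagonal entry
  have hb : u ⬝ᵥ (D * J * P).mulVec u = ∑ p : Fin d × Fin d, M p.1 p.2 * (x p.1 * y p.2) := by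
    have h1 : D * J * P = A * (M * B) := by
      rw [hMdef, ← hAA, ← hBB]; noncomm_ring
    rw [h1, quad_eq A (M * B) hAsymm, ← Matrix.mulVec_mulVec,
      ← hxdef, ← hydef]
    simp only [dotProduct, Matrix.mulVec, dotProduct, Finset.mul_sum,
      Fintype.sum_prod_type]
    exact Finset.sum_congr rfl fun i _ => Finset.sum_congr rfl fun j _ => by ring
  -- trace entry
  have ha : (D * J * P * Jᵀ).trace = ∑ p : Fin d × Fin d, M p.1 p.2 ^ 2 := by
    have h1 : D * J * P * Jᵀ = A * (M * (B * J)) := by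
      rw [hMdef, ← hAA, ← hBB, hJ.eq]; noncomm_ring
    rw [h1, Matrix.trace_mul_comm, ← Matrix.mul_assoc]
    have h2 : M * B * J * A = M * Mᵀ := by
      rw [hMdef, Matrix.transpose_mul, Matrix.transpose_mul, hAsymm.eq, hBsymm.eq, hJ.eq]
      noncomm_ring
    rw [h2]
    simp only [Matrix.trace, Matrix.diag, Matrix.mul_apply, Matrix.transpose_apply,
      Fintype.sum_prod_type, sq]
  -- diagonal entries
  have hcP : u ⬝ᵥ P.mulVec u = ∑ j, y j ^ 2 := by
    rw [← hBB, quad_eq B B hBsymm, ← hydef]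
    simp [dotProduct, sq]
  have hcD : u ⬝ᵥ D.mulVec u = ∑ i, x i ^ 2 := by
    rw [← hAA, quad_eq A A hAsymm, ← hxdef]
    simp [dotProduct, sq]
  -- Cauchy-Schwarz
  have key : (u ⬝ᵥ (D * J * P).mulVec u) ^ 2 ≤
      (D * J * P * Jᵀ).trace * ((u ⬝ᵥ P.mulVec u) * (u ⬝ᵥ D.mulVec u)) := by
    rw [hb, ha, hcP, hcD]
    calc (∑ p : Fin d × Fin d, M p.1 p.2 * (x p.1 * y p.2)) ^ 2
        ≤ (∑ p : Fin d × Fin d, M p.1 p.2 ^ 2) * ∑ p : Fin d × Fin d, (x p.1 * y p.2) ^ 2 :=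
          Finset.sum_mul_sq_le_sq_mul_sq _ _ _
      _ = (∑ p : Fin d × Fin d, M p.1 p.2 ^ 2) * ((∑ j, y j ^ 2) * ∑ i, x i ^ 2) := by
          congr 1
          rw [Fintype.sum_prod_type]
          simp_rw [mul_pow, ← Finset.mul_sum]
          rw [← Finset.sum_mul]
          ring
  have haNN : 0 ≤ (D * J * P * Jᵀ).trace := by
    rw [ha]; positivity
  have hPNN : 0 ≤ u ⬝ᵥ P.mulVec u := by rw [hcP]; positivity
  have hDNN : 0 ≤ u ⬝ᵥ D.mulVec u := by rw [hcD]; positivity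
  refine ⟨Matrix.PosSemidef.of_dotProduct_mulVec_nonneg ?_ ?_, key⟩
  · ext i j
    fin_cases i <;> fin_cases j <;> simp
  · intro v
    set a := (D * J * P * Jᵀ).trace
    set b := u ⬝ᵥ (D * J * P).mulVec u
    set c := (u ⬝ᵥ P.mulVec u) * (u ⬝ᵥ D.mulVec u)
    have hbac : b ^ 2 ≤ a * c := key
    have hcNN : 0 ≤ c := mul_nonneg hPNN hDNN
    simp only [dotProduct, Matrix.mulVec, Fin.sum_univ_two, Pi.star_apply, star_trivial,
      Matrix.cons_val', Matrix.cons_val_zero, Matrix.cons_val_one, Matrix.head_cons,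
      Matrix.empty_val', Matrix.cons_val_fin_one, Matrix.head_fin_const]
    have e00 : (!![a, b; b, c] : Matrix (Fin 2) (Fin 2) ℝ) 0 0 = a := rfl
    have e01 : (!![a, b; b, c] : Matrix (Fin 2) (Fin 2) ℝ) 0 1 = b := rfl
    have e10 : (!![a, b; b, c] : Matrix (Fin 2) (Fin 2) ℝ) 1 0 = b := rfl
    have e11 : (!![a, b; b, c] : Matrix (Fin 2) (Fin 2) ℝ) 1 1 = c := rfl
    rw [e00, e01, e10, e11]
    exact quad_psd_aux a b c (v 0) (v 1) haNN hcNN hbac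
end
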